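/- arXiv:1905.11628 — 7 statements merged into one kernel-verified Lean document; each statement's English description precedes it below -/
import Mathlib

section
/- (Mixing via shearing.) Let (M, 𝔅, μ) be a probability space, and let φ^V and φ^W be jointly measurable flows on M such that every map φ^W_s preserves μ. Let f : M → ℂ be a bounded measurable function, and let g, h ∈ L²(M, μ) be such that for every s ∈ ℝ one has g(φ^W_s(x)) − g(x) = ∫₀^s h(φ^W_r(x)) dr for μ-almost every x (with (r,x) ↦ h(φ^W_r(x)) product-measurable). Assume there exists σ > 0 such that for every s ∈ [0, σ] the functions x ↦ ∫₀^s f(φ^V_t(φ^W_r(x))) dr converge to 0 in μ-measure as t → ∞; that is, for every η > 0 and every δ > 0 there exists T > 0 such that for all t ≥ T, μ{x ∈ M : |∫₀^s f(φ^V_t(φ^W_r(x))) dr| ≥ η} ≤ δ. Then the correlation ∫_M f(φ^V_t(x)) · conj(g(x)) dμ(x) tends to 0 as t → ∞. -/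
open MeasureTheory Filter
open scoped ENNReal NNReal

private lemma aux_mul_div_le (a c : ℝ) (ha : 0 ≤ a) (hc : 0 ≤ c) :
    a * (c / (8 * (a + 1))) ≤ c / 8 := by
  have h1 : a * (c / (8 * (a + 1))) = (a / (a + 1)) * (c / 8) := by
    rw [mul_div_assoc', div_mul_div_comm, mul_comm (a + 1) 8]
  have h2 : a / (a + 1) ≤ 1 := by
    rw [div_le_one (by linarith)]; linarith
  calc a * (c / (8 * (a + 1))) = (a / (a + 1)) * (c / 8) := h1
    _ ≤ 1 * (c / 8) := mul_le_mul_of_nonneg_right h2 (by positivity)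
    _ = c / 8 := one_mul _

/-- **Mixing via shearing.**
Let `μ` be a probability measure on `M`, `φV` and `φW` jointly measurable flows on `M`
with every `φW s` preserving `μ`.  Let `f : M → ℂ` be bounded measurable, and
`g, h ∈ L²(μ)` with `g ∘ φW_s - g = ∫₀^s h ∘ φW_r dr` a.e. for every `s`
(i.e. `h` is the derivative of `g` along `φW`).  If there is `σ > 0` such that for every
`s ∈ [0, σ]` the functions `x ↦ ∫₀^s f(φV_t(φW_r x)) dr` converge to `0` in `μ`-measure
as `t → ∞`, then the correlations `∫ f ∘ φV_t · conj g dμ` tend to `0` as `t → ∞`. -/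
theorem mixing_via_shearing
    {M : Type*} [MeasurableSpace M] (μ : Measure M) [IsProbabilityMeasure μ]
    (φV φW : ℝ → M → M)
    (hV0 : φV 0 = id) (hVadd : ∀ s t : ℝ, φV (t + s) = φV t ∘ φV s)
    (hW0 : φW 0 = id) (hWadd : ∀ s t : ℝ, φW (t + s) = φW t ∘ φW s)
    (hVmeas : Measurable (fun p : ℝ × M => φV p.1 p.2))
    (hWmeas : Measurable (fun p : ℝ × M => φW p.1 p.2))
    (hWpres : ∀ s : ℝ, MeasurePreserving (φW s) μ μ)
    (f : M → ℂ) (hfm : Measurable f) (Cf : ℝ) (hfb : ∀ x, ‖f x‖ ≤ Cf)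
    (g h : M → ℂ) (hg : MemLp g 2 μ) (hh : MemLp h 2 μ)
    (hhmeas : Measurable (fun p : ℝ × M => h (φW p.1 p.2)))
    (hgh : ∀ s : ℝ, ∀ᵐ x ∂μ, g (φW s x) - g x = ∫ r in (0:ℝ)..s, h (φW r x))
    (σ : ℝ) (hσ : 0 < σ)
    (hshear : ∀ s ∈ Set.Icc (0:ℝ) σ, ∀ η > (0:ℝ), ∀ δ > (0:ℝ), ∃ T : ℝ, 0 < T ∧
      ∀ t ≥ T, μ {x : M | η ≤ ‖∫ r in (0:ℝ)..s, f (φV t (φW r x))‖}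
        ≤ ENNReal.ofReal δ) :
    Tendsto (fun t : ℝ => ∫ x, f (φV t x) * (starRingEnd ℂ) (g x) ∂μ) atTop (nhds 0) := by
  classical
  have hM : Nonempty M := by
    by_contra hM
    rw [not_nonempty_iff] at hM
    have h1 := measure_univ (μ := μ)
    rw [Set.univ_eq_empty_iff.2 hM] at h1
    simp at h1
  -- basic measurability
  have hWm : ∀ r : ℝ, Measurable (φW r) :=
    fun r => hWmeas.comp (measurable_const.prodMk measurable_id)
  have hVm : ∀ t : ℝ, Measurable (φV t) :=
    fun t => hVmeas.comp (measurable_const.prodMk measurable_id)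
  have hWkey : ∀ a b : ℝ, a + b = 0 → ∀ x, φW a (φW b x) = x := by
    intro a b hab x
    have h1 := congrFun (hWadd b a) x
    rw [hab, hW0] at h1
    exact h1.symm
  have hWe : ∀ r : ℝ, MeasurableEmbedding (φW r) := by
    intro r
    exact (MeasurableEquiv.mk
      ⟨φW r, φW (-r), fun x => hWkey (-r) r (by ring) x, fun x => hWkey r (-r) (by ring) x⟩
      (hWm r) (hWm (-r))).measurableEmbedding
  have hhm : Measurable h := by
    have h1 : Measurable fun x : M => h (φW (0:ℝ) x) :=
      hhmeas.comp ((measurable_const.prodMk measurable_id : Measurable fun x : M => ((0:ℝ), x)))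
    rw [hW0] at h1
    simpa using h1
  -- constants
  have hCf0 : 0 ≤ Cf := le_trans (norm_nonneg _) (hfb hM.some)
  have hgi : Integrable g μ := hg.integrable one_le_two
  have hhi : Integrable h μ := hh.integrable one_le_two
  set L : ℝ≥0∞ := ∫⁻ x, (‖h x‖₊ : ℝ≥0∞) ∂μ with hLdef
  have hL : L ≠ ∞ := hhi.2.ne
  set Ch : ℝ := L.toReal with hChdef
  have hCh0 : 0 ≤ Ch := ENNReal.toReal_nonneg
  set Cg : ℝ := ∫ x, ‖g x‖ ∂μ with hCgdef
  have hCg0 : 0 ≤ Cg := integral_nonneg fun x => norm_nonneg _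
  have hgC : Integrable (fun x => (starRingEnd ℂ) (g x)) μ := by
    refine (hgi.mono ?_ ?_)
    · exact continuous_star.comp_aestronglyMeasurable hgi.1
    · filter_upwards with x
      exact le_of_eq (RCLike.norm_conj _)
  -- the L¹ bound for g ∘ φW r - g
  have L1bd : ∀ r : ℝ, 0 ≤ r → ∫ x, ‖g (φW r x) - g x‖ ∂μ ≤ r * Ch := by
    intro r hr
    have hmeasΨ : AEStronglyMeasurable
        (fun x => ∫ u in Set.Ioc (0:ℝ) r, h (φW u x)) μ := by
      have h1 : StronglyMeasurable (fun p : M × ℝ => h (φW p.2 p.1)) :=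
        (hhmeas.comp measurable_swap).stronglyMeasurable
      exact h1.integral_prod_right'.aestronglyMeasurable
    have hcong : ∫ x, ‖g (φW r x) - g x‖ ∂μ
        = ∫ x, ‖∫ u in Set.Ioc (0:ℝ) r, h (φW u x)‖ ∂μ := by
      refine integral_congr_ae ?_
      filter_upwards [hgh r] with x hx
      rw [hx, intervalIntegral.integral_of_le hr]
    rw [hcong]
    have hnn : 0 ≤ᵐ[μ] fun x => ‖∫ u in Set.Ioc (0:ℝ) r, h (φW u x)‖ :=
      Filter.Eventually.of_forall fun x => norm_nonneg _
    rw [integral_eq_lintegral_of_nonneg_ae hnn hmeasΨ.norm]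
    have hbound : ∫⁻ x, ENNReal.ofReal ‖∫ u in Set.Ioc (0:ℝ) r, h (φW u x)‖ ∂μ
        ≤ ENNReal.ofReal r * L := by
      have hstep1 : ∀ x, ENNReal.ofReal ‖∫ u in Set.Ioc (0:ℝ) r, h (φW u x)‖
          ≤ ∫⁻ u in Set.Ioc (0:ℝ) r, (‖h (φW u x)‖₊ : ℝ≥0∞) ∂volume := by
        intro x
        rw [ofReal_norm]
        exact enorm_integral_le_lintegral_enorm _
      calc ∫⁻ x, ENNReal.ofReal ‖∫ u in Set.Ioc (0:ℝ) r, h (φW u x)‖ ∂μ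
          ≤ ∫⁻ x, ∫⁻ u in Set.Ioc (0:ℝ) r, (‖h (φW u x)‖₊ : ℝ≥0∞) ∂volume ∂μ :=
            lintegral_mono hstep1
        _ = ∫⁻ u in Set.Ioc (0:ℝ) r, ∫⁻ x, (‖h (φW u x)‖₊ : ℝ≥0∞) ∂μ ∂volume := by
            refine lintegral_lintegral_swap ?_
            exact ((hhmeas.comp measurable_swap).enorm).aemeasurable
        _ = ∫⁻ _ in Set.Ioc (0:ℝ) r, L ∂volume :=
            lintegral_congr fun u => (hWpres u).lintegral_comp hhm.enorm
        _ = ENNReal.ofReal r * L := by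
            rw [lintegral_const, Measure.restrict_apply_univ, Real.volume_Ioc, sub_zero,
              mul_comm]
    have hfin : ENNReal.ofReal r * L ≠ ∞ := ENNReal.mul_ne_top ENNReal.ofReal_ne_top hL
    calc (∫⁻ x, ENNReal.ofReal ‖∫ u in Set.Ioc (0:ℝ) r, h (φW u x)‖ ∂μ).toReal
        ≤ (ENNReal.ofReal r * L).toReal := ENNReal.toReal_mono hfin hbound
      _ = r * Ch := by rw [ENNReal.toReal_mul, ENNReal.toReal_ofReal hr]
  -- main estimate
  refine NormedAddCommGroup.tendsto_nhds_zero.mpr fun ε hε => ?_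
  set K : ℝ := Cf * Ch with hKdef
  have hK0 : 0 ≤ K := mul_nonneg hCf0 hCh0
  set s : ℝ := min σ (ε / (2 * (K + 1))) with hsdef
  have hs0 : 0 < s := lt_min hσ (by positivity)
  have hsσ : s ≤ σ := min_le_left _ _
  have herr : K * s ≤ ε / 2 := by
    have h1 : s ≤ ε / (2 * (K + 1)) := min_le_right _ _
    have h2 : K * s ≤ K * (ε / (2 * (K + 1))) := by
      exact mul_le_mul_of_nonneg_left h1 hK0
    have h3 : K * (ε / (2 * (K + 1))) ≤ ε / 2 := by
      rw [mul_div_assoc', div_le_div_iff₀ (by positivity) two_pos]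
      nlinarith
    linarith
  set ν : Measure ℝ := volume.restrict (Set.Ioc (0:ℝ) s) with hνdef
  have hνuniv : ν Set.univ = ENNReal.ofReal s := by
    rw [hνdef, Measure.restrict_apply_univ, Real.volume_Ioc, sub_zero]
  have hνfin : ν Set.univ < ∞ := by rw [hνuniv]; exact ENNReal.ofReal_lt_top
  have hνIoc : ν (Set.Ioc (0:ℝ) s) = ENNReal.ofReal s := by
    rw [hνdef, Measure.restrict_apply measurableSet_Ioc, Set.inter_self,
      Real.volume_Ioc, sub_zero]
  -- notation
  set F : ℝ → M → ℂ := fun t x => ∫ r, f (φV t (φW r x)) ∂ν with hFdef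
  set B : ℝ → ℂ := fun t => ∫ x, f (φV t x) * (starRingEnd ℂ) (g x) ∂μ with hBdef
  set A : ℝ → ℂ := fun t => ∫ x, F t x * (starRingEnd ℂ) (g x) ∂μ with hAdef
  -- measurability of the inner function
  have hfVW : ∀ t : ℝ, Measurable (fun p : ℝ × M => f (φV t (φW p.1 p.2))) :=
    fun t => hfm.comp ((hVm t).comp hWmeas)
  have hFmeas : ∀ t : ℝ, Measurable (F t) := by
    intro t
    have h1 : StronglyMeasurable (fun p : M × ℝ => f (φV t (φW p.2 p.1))) :=
      ((hfVW t).comp measurable_swap).stronglyMeasurable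
    exact h1.integral_prod_right'.measurable
  have hFbd : ∀ t x, ‖F t x‖ ≤ Cf * s := by
    intro t x
    have h1 : ‖F t x‖ ≤ Cf * (volume (Set.Ioc (0:ℝ) s)).toReal := by
      rw [hFdef]
      refine norm_setIntegral_le_of_norm_le_const ?_ ?_
      · rw [Real.volume_Ioc]; exact ENNReal.ofReal_lt_top
      · intro r _
        exact hfb (φV t (φW r x))
    rwa [Real.volume_Ioc, sub_zero, ENNReal.toReal_ofReal hs0.le] at h1
  -- key estimate : ‖s • B t - A t‖ ≤ K * s * s
  have _hνfinInst : IsFiniteMeasure ν := ⟨by rw [hνuniv]; exact ENNReal.ofReal_lt_top⟩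
  have hKey : ∀ t : ℝ, ‖(s : ℝ) • B t - A t‖ ≤ K * s * s := by
    intro t
    -- integrability of `conj g ∘ snd` on the product space
    have hac : Measure.map Prod.snd (ν.prod μ) ≪ μ := by
      rw [Measure.map_snd_prod]; exact Measure.smul_absolutelyContinuous
    have h1 : Integrable (fun x => (starRingEnd ℂ) (g x)) (Measure.map Prod.snd (ν.prod μ)) := by
      rw [Measure.map_snd_prod]; exact hgC.smul_measure hνfin.ne
    have hgsnd : Integrable (fun p : ℝ × M => (starRingEnd ℂ) (g p.2)) (ν.prod μ) :=
      (integrable_map_measure (hgC.1.mono_ac hac) measurable_snd.aemeasurable).mp h1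
    have hG : Integrable (fun p : ℝ × M =>
        f (φV t (φW p.1 p.2)) * (starRingEnd ℂ) (g p.2)) (ν.prod μ) :=
      hgsnd.bdd_mul (hfVW t).aestronglyMeasurable
        (Filter.Eventually.of_forall fun p => by exact hfb _)
    have hswap : (∫ r, (∫ x, f (φV t (φW r x)) * (starRingEnd ℂ) (g x) ∂μ) ∂ν)
        = ∫ x, (∫ r, f (φV t (φW r x)) * (starRingEnd ℂ) (g x) ∂ν) ∂μ :=
      integral_integral_swap hG
    have hA' : A t = ∫ r, (∫ x, f (φV t (φW r x)) * (starRingEnd ℂ) (g x) ∂μ) ∂ν := by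
      rw [hswap]
      simp only [hAdef, hFdef]
      refine integral_congr_ae (Filter.Eventually.of_forall fun x => ?_)
      exact (integral_mul_const _ _).symm
    -- the correlation is invariant under composing with `φW r`
    have hBr : ∀ r : ℝ,
        (∫ x, f (φV t (φW r x)) * (starRingEnd ℂ) (g (φW r x)) ∂μ) = B t := by
      intro r
      exact (hWpres r).integral_comp (hWe r) (fun y => f (φV t y) * (starRingEnd ℂ) (g y))
    have hQint : Integrable (fun y => f (φV t y) * (starRingEnd ℂ) (g y)) μ :=
      hgC.bdd_mul (hfm.comp (hVm t)).aestronglyMeasurable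
        (Filter.Eventually.of_forall fun y => by exact hfb _)
    have hP1int : ∀ r : ℝ,
        Integrable (fun x => f (φV t (φW r x)) * (starRingEnd ℂ) (g (φW r x))) μ :=
      fun r => ((hWpres r).integrable_comp_emb (hWe r)).mpr hQint
    have hgWint : ∀ r : ℝ, Integrable (fun x => (starRingEnd ℂ) (g (φW r x))) μ :=
      fun r => ((hWpres r).integrable_comp_emb (hWe r)).mpr hgC
    have hP2int : ∀ r : ℝ,
        Integrable (fun x => f (φV t (φW r x)) * (starRingEnd ℂ) (g x)) μ :=
      fun r => hgC.bdd_mul (hfm.comp ((hVm t).comp (hWm r))).aestronglyMeasurable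
        (Filter.Eventually.of_forall fun y => by exact hfb _)
    have hdiff : ∀ r ∈ Set.Ioc (0:ℝ) s,
        ‖B t - ∫ x, f (φV t (φW r x)) * (starRingEnd ℂ) (g x) ∂μ‖ ≤ K * s := by
      intro r hr
      rw [← hBr r, ← integral_sub (hP1int r) (hP2int r)]
      have hptle : ∀ x, ‖f (φV t (φW r x)) * (starRingEnd ℂ) (g (φW r x))
            - f (φV t (φW r x)) * (starRingEnd ℂ) (g x)‖
          ≤ Cf * ‖g (φW r x) - g x‖ := by
        intro x
        rw [← mul_sub, ← map_sub, norm_mul, RCLike.norm_conj]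
        refine mul_le_mul_of_nonneg_right ?_ (norm_nonneg _)
        exact hfb _
      calc ‖∫ x, (f (φV t (φW r x)) * (starRingEnd ℂ) (g (φW r x))
              - f (φV t (φW r x)) * (starRingEnd ℂ) (g x)) ∂μ‖
          ≤ ∫ x, ‖f (φV t (φW r x)) * (starRingEnd ℂ) (g (φW r x))
              - f (φV t (φW r x)) * (starRingEnd ℂ) (g x)‖ ∂μ :=
            norm_integral_le_integral_norm _
        _ ≤ ∫ x, Cf * ‖g (φW r x) - g x‖ ∂μ := by
            have hRint : Integrable (fun x => Cf * ‖g (φW r x) - g x‖) μ := by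
              refine (((hgWint r).sub hgC).norm.const_mul Cf).congr ?_
              filter_upwards with x
              simp only [Pi.sub_apply]
              rw [← map_sub, RCLike.norm_conj]
            exact integral_mono ((hP1int r).sub (hP2int r)).norm hRint hptle
        _ = Cf * ∫ x, ‖g (φW r x) - g x‖ ∂μ := integral_const_mul _ _
        _ ≤ Cf * (r * Ch) :=
            mul_le_mul_of_nonneg_left (L1bd r hr.1.le) hCf0
        _ ≤ K * s := by
            rw [hKdef]
            nlinarith [hr.1, hr.2, mul_nonneg hCf0 hCh0]
    have hsB : (s : ℝ) • B t = ∫ _, B t ∂ν := by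
      rw [integral_const, Measure.real, hνuniv, ENNReal.toReal_ofReal hs0.le]
    have hInt1 : Integrable (fun _ : ℝ => B t) ν := integrable_const _
    have hInt2 : Integrable
        (fun r => ∫ x, f (φV t (φW r x)) * (starRingEnd ℂ) (g x) ∂μ) ν :=
      hG.integral_prod_left
    rw [hsB, hA', ← integral_sub hInt1 hInt2]
    have hstep : ‖∫ r, (B t - ∫ x, f (φV t (φW r x)) * (starRingEnd ℂ) (g x) ∂μ) ∂ν‖
        ≤ (K * s) * (volume (Set.Ioc (0:ℝ) s)).toReal := by
      rw [hνdef]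
      exact norm_setIntegral_le_of_norm_le_const
        (by rw [Real.volume_Ioc]; exact ENNReal.ofReal_lt_top)
        (fun r hr => hdiff r hr)
    rw [Real.volume_Ioc, sub_zero, ENNReal.toReal_ofReal hs0.le] at hstep
    calc ‖∫ r, (B t - ∫ x, f (φV t (φW r x)) * (starRingEnd ℂ) (g x) ∂μ) ∂ν‖
        ≤ (K * s) * s := hstep
      _ = K * s * s := by ring
  -- the shearing part : eventually ‖A t‖ ≤ s * ε / 4
  have hAsmall : ∀ᶠ t in atTop, ‖A t‖ ≤ s * ε / 4 := by
    have hsCf : 0 ≤ s * Cf := mul_nonneg hs0.le hCf0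
    set ε₂ : ℝ := s * ε / (8 * (s * Cf + 1)) with hε₂def
    have hε₂ : 0 < ε₂ := div_pos (by positivity) (by nlinarith)
    set η : ℝ := s * ε / (8 * (Cg + 1)) with hηdef
    have hη : 0 < η := div_pos (by positivity) (by nlinarith)
    obtain ⟨δ', hδ'0, hδ'⟩ := exists_pos_setLIntegral_lt_of_measure_lt
      (μ := μ) (f := fun x => (‖g x‖₊ : ℝ≥0∞)) hgi.2.ne
      (ENNReal.ofReal_pos.mpr hε₂).ne'
    obtain ⟨δ, hδ0, hδlt⟩ : ∃ δ : ℝ, 0 < δ ∧ ENNReal.ofReal δ < δ' := by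
      rcases eq_or_ne δ' ∞ with hcase | hcase
      · exact ⟨1, one_pos, by rw [hcase]; exact ENNReal.ofReal_lt_top⟩
      · have htR : 0 < δ'.toReal := ENNReal.toReal_pos hδ'0.ne' hcase
        refine ⟨δ'.toReal / 2, by linarith, ?_⟩
        rw [ENNReal.ofReal_lt_iff_lt_toReal (by linarith) hcase]
        linarith
    obtain ⟨T, hT0, hT⟩ := hshear s ⟨hs0.le, hsσ⟩ η hη δ hδ0
    rw [eventually_atTop]
    refine ⟨T, fun t ht => ?_⟩
    set bad : Set M := {x | η ≤ ‖F t x‖} with hbaddef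
    have hbadm : MeasurableSet bad := measurableSet_le measurable_const (hFmeas t).norm
    have hseteq : bad = {x : M | η ≤ ‖∫ r in (0:ℝ)..s, f (φV t (φW r x))‖} := by
      ext x
      simp only [hbaddef, Set.mem_setOf_eq, hFdef, hνdef]
      rw [intervalIntegral.integral_of_le hs0.le]
    have hbadμ : μ bad < δ' := by
      rw [hseteq]
      exact lt_of_le_of_lt (hT t ht) hδlt
    have hbadg : ∫ x in bad, ‖g x‖ ∂μ ≤ ε₂ := by
      have h1 := hδ' bad hbadμ
      have h2 : ∫ x in bad, ‖g x‖ ∂μ = (∫⁻ x in bad, (‖g x‖₊ : ℝ≥0∞) ∂μ).toReal := by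
        rw [integral_eq_lintegral_of_nonneg_ae
          (Filter.Eventually.of_forall fun x => norm_nonneg _) hgi.1.norm.restrict]
        congr 1
        exact lintegral_congr fun x => ofReal_norm _
      rw [h2]
      calc (∫⁻ x in bad, (‖g x‖₊ : ℝ≥0∞) ∂μ).toReal
          ≤ (ENNReal.ofReal ε₂).toReal :=
            ENNReal.toReal_mono ENNReal.ofReal_ne_top h1.le
        _ = ε₂ := ENNReal.toReal_ofReal hε₂.le
    have hnormint : Integrable (fun x => ‖F t x‖ * ‖g x‖) μ :=
      hgi.norm.bdd_mul (hFmeas t).norm.aestronglyMeasurable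
        (Filter.Eventually.of_forall fun x => by
          rw [Real.norm_eq_abs, abs_of_nonneg (norm_nonneg _)]; exact hFbd t x)
    have hA1 : ‖A t‖ ≤ ∫ x, ‖F t x‖ * ‖g x‖ ∂μ := by
      simp only [hAdef]
      refine le_trans (norm_integral_le_integral_norm _)
        (le_of_eq (integral_congr_ae (Filter.Eventually.of_forall fun x => ?_)))
      simp [norm_mul, RCLike.norm_conj]
    have hsplit : ∫ x, ‖F t x‖ * ‖g x‖ ∂μ
        = (∫ x in bad, ‖F t x‖ * ‖g x‖ ∂μ) + ∫ x in badᶜ, ‖F t x‖ * ‖g x‖ ∂μ :=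
      (integral_add_compl hbadm hnormint).symm
    have hbadpart : ∫ x in bad, ‖F t x‖ * ‖g x‖ ∂μ ≤ (Cf * s) * ε₂ := by
      calc ∫ x in bad, ‖F t x‖ * ‖g x‖ ∂μ
          ≤ ∫ x in bad, (Cf * s) * ‖g x‖ ∂μ := by
            refine setIntegral_mono_on hnormint.integrableOn
              ((hgi.norm.const_mul _).integrableOn) hbadm fun x _ => ?_
            exact mul_le_mul_of_nonneg_right (hFbd t x) (norm_nonneg _)
        _ = (Cf * s) * ∫ x in bad, ‖g x‖ ∂μ := integral_const_mul _ _
        _ ≤ (Cf * s) * ε₂ := mul_le_mul_of_nonneg_left hbadg (by positivity)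
    have hgoodpart : ∫ x in badᶜ, ‖F t x‖ * ‖g x‖ ∂μ ≤ η * Cg := by
      calc ∫ x in badᶜ, ‖F t x‖ * ‖g x‖ ∂μ
          ≤ ∫ x in badᶜ, η * ‖g x‖ ∂μ := by
            refine setIntegral_mono_on hnormint.integrableOn
              ((hgi.norm.const_mul _).integrableOn) hbadm.compl fun x hx => ?_
            have hx' : ‖F t x‖ < η := by
              have : ¬ (η ≤ ‖F t x‖) := hx
              exact not_le.mp this
            exact mul_le_mul_of_nonneg_right hx'.le (norm_nonneg _)
        _ = η * ∫ x in badᶜ, ‖g x‖ ∂μ := integral_const_mul _ _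
        _ ≤ η * Cg := by
            refine mul_le_mul_of_nonneg_left ?_ hη.le
            exact setIntegral_le_integral hgi.norm
              (Filter.Eventually.of_forall fun x => norm_nonneg _)
    have hb1 : (Cf * s) * ε₂ ≤ s * ε / 8 := by
      rw [hε₂def, mul_comm Cf s]
      exact aux_mul_div_le (s * Cf) (s * ε) hsCf (mul_nonneg hs0.le hε.le)
    have hb2 : η * Cg ≤ s * ε / 8 := by
      rw [hηdef, mul_comm]
      exact aux_mul_div_le Cg (s * ε) hCg0 (mul_nonneg hs0.le hε.le)
    calc ‖A t‖ ≤ ∫ x, ‖F t x‖ * ‖g x‖ ∂μ := hA1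
      _ = (∫ x in bad, ‖F t x‖ * ‖g x‖ ∂μ) + ∫ x in badᶜ, ‖F t x‖ * ‖g x‖ ∂μ := hsplit
      _ ≤ (Cf * s) * ε₂ + η * Cg := add_le_add hbadpart hgoodpart
      _ ≤ s * ε / 8 + s * ε / 8 := add_le_add hb1 hb2
      _ = s * ε / 4 := by ring
  -- conclusion
  filter_upwards [hAsmall] with t hAt
  have h1 := hKey t
  have h2 : ‖(s : ℝ) • B t‖ ≤ ‖(s : ℝ) • B t - A t‖ + ‖A t‖ := by
    simpa using norm_add_le ((s : ℝ) • B t - A t) (A t)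
  rw [norm_smul, Real.norm_eq_abs, abs_of_pos hs0] at h2
  have h3 : s * ‖B t‖ ≤ K * s * s + s * ε / 4 := by linarith
  have h4 : K * s * s ≤ (ε / 2) * s := by
    calc K * s * s = (K * s) * s := by ring
    _ ≤ (ε / 2) * s := mul_le_mul_of_nonneg_right herr hs0.le
  have : s * ‖B t‖ < s * ε := by nlinarith
  have := lt_of_mul_lt_mul_left this hs0.le
  exact this
end

section
/- (Mixing via shearing, version 2.) Let (M, 𝔅, μ) be a probability space, and let φ^V and φ^W be jointly measurable flows on M such that every map φ^W_s preserves μ. Let f : M → ℂ be a bounded measurable function, and let g, h ∈ L²(M, μ) be such that for every s ∈ ℝ one has g(φ^W_s(x)) − g(x) = ∫₀^s h(φ^W_r(x)) dr for μ-almost every x (with (r,x) ↦ h(φ^W_r(x)) product-measurable). Assume that for every δ > 0 there exists σ ∈ (0,1) such that for every η > 0 there exists T > 0 such that for every t ≥ T and every s ∈ [0, σ], μ{x ∈ M : |∫₀^s f(φ^V_t(φ^W_r(x))) dr| ≥ η} ≤ δ. Then the correlation ∫_M f(φ^V_t(x)) · conj(g(x)) dμ(x) tends to 0 as t → ∞.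 -/
open MeasureTheory Filter
open scoped ENNReal

private lemma aux_div_le {ε a b : ℝ} (hε : 0 ≤ ε) (ha : 0 ≤ a) (hb : 0 ≤ b) :
    ε / (4 * (a + 1) * (b + 1)) * (a * b) ≤ ε / 4 := by
  rw [div_mul_eq_mul_div, div_le_div_iff₀ (by positivity) (by positivity)]
  nlinarith [mul_nonneg (mul_nonneg hε ha) hb, mul_nonneg hε ha, mul_nonneg hε hb]

private lemma aux_div_le' {ε a : ℝ} (hε : 0 ≤ ε) (ha : 0 ≤ a) :
    ε / (4 * (a + 1)) * a ≤ ε / 4 := by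
  rw [div_mul_eq_mul_div, div_le_div_iff₀ (by positivity) (by positivity)]
  nlinarith [mul_nonneg hε ha]

/-- **Mixing via shearing, version 2.**
Same setting as the first mixing-via-shearing lemma, but with the weaker shearing
assumption: for every `δ > 0` there exists `σ ∈ (0,1)` such that for every `η > 0`
there exists `T > 0` such that for every `t ≥ T` and every `s ∈ [0, σ]`,
`μ{x : |∫₀^s f(φV_t(φW_r x)) dr| ≥ η} ≤ δ`.  Then the correlations
`∫ f ∘ φV_t · conj g dμ` tend to `0` as `t → ∞`. -/
theorem mixing_via_shearing_two
    {M : Type*} [MeasurableSpace M] (μ : Measure M) [IsProbabilityMeasure μ]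
    (φV φW : ℝ → M → M)
    (hV0 : φV 0 = id) (hVadd : ∀ s t : ℝ, φV (t + s) = φV t ∘ φV s)
    (hW0 : φW 0 = id) (hWadd : ∀ s t : ℝ, φW (t + s) = φW t ∘ φW s)
    (hVmeas : Measurable (fun p : ℝ × M => φV p.1 p.2))
    (hWmeas : Measurable (fun p : ℝ × M => φW p.1 p.2))
    (hWpres : ∀ s : ℝ, MeasurePreserving (φW s) μ μ)
    (f : M → ℂ) (hfm : Measurable f) (Cf : ℝ) (hfb : ∀ x, ‖f x‖ ≤ Cf)
    (g h : M → ℂ) (hg : MemLp g 2 μ) (hh : MemLp h 2 μ)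
    (hhmeas : Measurable (fun p : ℝ × M => h (φW p.1 p.2)))
    (hgh : ∀ s : ℝ, ∀ᵐ x ∂μ, g (φW s x) - g x = ∫ r in (0:ℝ)..s, h (φW r x))
    (hshear : ∀ δ > (0:ℝ), ∃ σ ∈ Set.Ioo (0:ℝ) 1, ∀ η > (0:ℝ), ∃ T : ℝ, 0 < T ∧
      ∀ t ≥ T, ∀ s ∈ Set.Icc (0:ℝ) σ,
        μ {x : M | η ≤ ‖∫ r in (0:ℝ)..s, f (φV t (φW r x))‖}
          ≤ ENNReal.ofReal δ) :
    Tendsto (fun t : ℝ => ∫ x, f (φV t x) * (starRingEnd ℂ) (g x) ∂μ) atTop (nhds 0) := by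
  -- nonemptiness and nonnegativity of `Cf`
  have hM : Nonempty M := by
    by_contra hM
    rw [not_nonempty_iff] at hM
    have h1 := measure_univ (μ := μ)
    rw [Set.univ_eq_empty_iff.2 hM] at h1
    simp at h1
  obtain ⟨x₀⟩ := hM
  have hCf : 0 ≤ Cf := le_trans (norm_nonneg _) (hfb x₀)
  -- basic measurability
  have hWm : ∀ s : ℝ, Measurable (φW s) := fun s =>
    hWmeas.comp (measurable_const.prodMk measurable_id)
  have hVm : ∀ s : ℝ, Measurable (φV s) := fun s =>
    hVmeas.comp (measurable_const.prodMk measurable_id)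
  have hWcomp : ∀ a b : ℝ, ∀ x, φW a (φW b x) = φW (a + b) x := fun a b x => by
    rw [hWadd b a]; rfl
  let eW : ℝ → M ≃ᵐ M := fun s =>
    { toFun := φW s
      invFun := φW (-s)
      left_inv := fun x => by rw [hWcomp, neg_add_cancel, hW0]; rfl
      right_inv := fun x => by rw [hWcomp, add_neg_cancel, hW0]; rfl
      measurable_toFun := hWm s
      measurable_invFun := hWm (-s) }
  have heWcoe : ∀ s : ℝ, ⇑(eW s) = φW s := fun s => rfl
  -- integrability of `g` and `h`
  have hgint : Integrable g μ := hg.integrable one_le_two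
  have hhint : Integrable h μ := hh.integrable one_le_two
  set Cg1 := ∫ x, ‖g x‖ ∂μ with hCg1def
  set Cg2 := (eLpNorm g 2 μ).toReal with hCg2def
  set Ch1 := ∫ x, ‖h x‖ ∂μ with hCh1def
  have hCg1_nonneg : 0 ≤ Cg1 := integral_nonneg fun x => norm_nonneg _
  have hCh1_nonneg : 0 ≤ Ch1 := integral_nonneg fun x => norm_nonneg _
  have hCg2_nonneg : 0 ≤ Cg2 := ENNReal.toReal_nonneg
  rw [NormedAddCommGroup.tendsto_nhds_zero]
  intro ε hε
  set δ := (ε / (4 * (Cf + 1) * (Cg2 + 1)))^2 with hδdef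
  have hδpos : 0 < δ := by positivity
  obtain ⟨σ, hσIoo, hσprop⟩ := hshear δ hδpos
  set σ' := min σ (ε / (4 * (Cf + 1) * (Ch1 + 1))) with hσ'def
  have hσ'pos : 0 < σ' := lt_min hσIoo.1 (by positivity)
  have hσ'le : σ' ≤ σ := min_le_left _ _
  set η := σ' * (ε / (4 * (Cg1 + 1))) with hηdef
  have hηpos : 0 < η := by positivity
  obtain ⟨T, hT, hTprop⟩ := hσprop η hηpos
  rw [eventually_atTop]
  refine ⟨T, fun t ht => ?_⟩
  set C : ℂ := ∫ x, f (φV t x) * (starRingEnd ℂ) (g x) ∂μ with hCdef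
  -- the averaged function K
  set K : M → ℂ := fun x => ∫ s in Set.Ioc (0:ℝ) σ', f (φV t (φW s x)) with hKdef
  have hFWsm : ∀ s : ℝ, Measurable fun x => f (φV t (φW s x)) :=
    fun s => hfm.comp ((hVm t).comp (hWm s))
  have hFWb : ∀ (s : ℝ) (x : M), ‖f (φV t (φW s x))‖ ≤ Cf := fun s x => by
    exact hfb _
  have hKsm : StronglyMeasurable K := by
    apply MeasureTheory.StronglyMeasurable.integral_prod_right'
      (f := fun q : M × ℝ => f (φV t (φW q.2 q.1)))
    exact (hfm.comp ((hVm t).comp (hWmeas.comp measurable_swap))).stronglyMeasurable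
  have hKbound : ∀ x, ‖K x‖ ≤ Cf * σ' := by
    intro x
    have h1 : ‖K x‖ ≤ Cf * (volume (Set.Ioc (0:ℝ) σ')).toReal := by
      apply norm_setIntegral_le_of_norm_le_const
      · rw [Real.volume_Ioc]; exact ENNReal.ofReal_lt_top
      · exact fun s _ => hFWb s x
    rwa [Real.volume_Ioc, sub_zero, ENNReal.toReal_ofReal hσ'pos.le] at h1
  have hKeq : ∀ x, (∫ r in (0:ℝ)..σ', f (φV t (φW r x))) = K x := fun x =>
    intervalIntegral.integral_of_le hσ'pos.le
  set E := {x : M | η ≤ ‖∫ r in (0:ℝ)..σ', f (φV t (φW r x))‖} with hEdef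
  have hEμ : μ E ≤ ENNReal.ofReal δ := hTprop t ht σ' ⟨hσ'pos.le, hσ'le⟩
  have hEeq : E = {x : M | η ≤ ‖K x‖} := by
    ext x
    simp only [hEdef, Set.mem_setOf_eq, hKeq x]
  have hEmeas : MeasurableSet E := by
    rw [hEeq]; exact measurableSet_le measurable_const hKsm.measurable.norm
  -- Cauchy-Schwarz on E
  have hCS : ∫ x in E, ‖g x‖ ∂μ ≤ Cg2 * Real.sqrt δ := by
    have hg2fin : eLpNorm g 2 μ ≠ ⊤ := hg.2.ne
    have e1 : ∫ x in E, ‖g x‖ ∂μ = (eLpNorm g 1 (μ.restrict E)).toReal := by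
      rw [eLpNorm_one_eq_lintegral_enorm,
        integral_norm_eq_lintegral_enorm (hg.1.restrict)]
    have e2 := eLpNorm_le_eLpNorm_mul_rpow_measure_univ (p := 1) (q := 2)
      one_le_two (hg.1.restrict (s := E))
    have hexp : (1 / (1:ℝ≥0∞).toReal - 1 / (2:ℝ≥0∞).toReal) = (1/2 : ℝ) := by
      norm_num
    rw [hexp, Measure.restrict_apply_univ] at e2
    have e3 : eLpNorm g 2 (μ.restrict E) ≤ eLpNorm g 2 μ :=
      eLpNorm_mono_measure g Measure.restrict_le_self
    have e5 : μ E ^ (1/2 : ℝ) ≤ (ENNReal.ofReal δ) ^ (1/2 : ℝ) :=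
      ENNReal.rpow_le_rpow hEμ (by norm_num)
    have e6 : (ENNReal.ofReal δ) ^ (1/2 : ℝ) = ENNReal.ofReal (Real.sqrt δ) := by
      rw [ENNReal.ofReal_rpow_of_pos hδpos, Real.sqrt_eq_rpow]
    have e7 : eLpNorm g 1 (μ.restrict E)
        ≤ eLpNorm g 2 μ * ENNReal.ofReal (Real.sqrt δ) := by
      refine le_trans e2 ?_
      rw [← e6]
      exact mul_le_mul' e3 e5
    rw [e1]
    have e8 : (eLpNorm g 2 μ * ENNReal.ofReal (Real.sqrt δ)).toReal
        = Cg2 * Real.sqrt δ := by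
      rw [ENNReal.toReal_mul, ENNReal.toReal_ofReal (Real.sqrt_nonneg _)]
    rw [← e8]
    exact ENNReal.toReal_mono
      (ENNReal.mul_ne_top hg2fin ENNReal.ofReal_ne_top) e7
  -- measure preservation
  have hIs : ∀ s : ℝ,
      (∫ x, f (φV t (φW s x)) * (starRingEnd ℂ) (g (φW s x)) ∂μ) = C := fun s =>
    (hWpres s).integral_comp (eW s).measurableEmbedding
      (fun y => f (φV t y) * (starRingEnd ℂ) (g y))
  -- the function Habs and its properties
  set Habs : M → ℝ := fun x => ∫ r in Set.Ioc (0:ℝ) σ', ‖h (φW r x)‖ with hHabsdef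
  have hslice_int : ∀ r : ℝ, Integrable (fun x => ‖h (φW r x)‖) μ := fun r =>
    (((hWpres r).integrable_comp hh.1).2 hhint).norm
  have hslice_val : ∀ r : ℝ, ∫ x, ‖h (φW r x)‖ ∂μ = Ch1 := fun r =>
    (hWpres r).integral_comp (eW r).measurableEmbedding (fun y => ‖h y‖)
  have hPint : Integrable (fun p : ℝ × M => ‖h (φW p.1 p.2)‖)
      ((volume.restrict (Set.Ioc (0:ℝ) σ')).prod μ) := by
    rw [integrable_prod_iff (hhmeas.norm).aestronglyMeasurable]
    refine ⟨Eventually.of_forall fun r => hslice_int r, ?_⟩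
    have h2 : (fun r : ℝ => ∫ x, ‖‖h (φW r x)‖‖ ∂μ) = fun _ => Ch1 := by
      funext r
      simp only [norm_norm]
      exact hslice_val r
    rw [h2]
    exact integrable_const _
  have hHabs_int : Integrable Habs μ := hPint.integral_prod_right
  have hHabs_val : ∫ x, Habs x ∂μ = σ' * Ch1 := by
    have hswap := integral_integral_swap
      (f := fun (r : ℝ) (x : M) => ‖h (φW r x)‖)
      (μ := volume.restrict (Set.Ioc (0:ℝ) σ')) (ν := μ) hPint
    rw [← hswap]
    simp only [hslice_val]
    rw [integral_const, measureReal_restrict_apply_univ, Real.volume_real_Ioc, sub_zero,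
      max_eq_left hσ'pos.le, smul_eq_mul]
  /-
      ENNReal.toReal_ofReal hσ'pos.le, smul_eq_mul] -/
  have hHslice : ∀ᵐ x ∂μ, Integrable (fun r => ‖h (φW r x)‖)
      (volume.restrict (Set.Ioc (0:ℝ) σ')) := hPint.prod_left_ae
  -- full product integrability of the main integrand
  have hgconj_int : Integrable (fun x => (starRingEnd ℂ) (g x)) μ := by
    refine hgint.mono (RCLike.continuous_conj.comp_aestronglyMeasurable hg.1) ?_
    exact Eventually.of_forall fun x => by simp
  have hproduct_int : Integrable
      (fun p : ℝ × M => f (φV t (φW p.1 p.2)) * (starRingEnd ℂ) (g p.2))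
      ((volume.restrict (Set.Ioc (0:ℝ) σ')).prod μ) := by
    refine Integrable.mono' (g := fun p : ℝ × M => Cf * ‖g p.2‖) ?_ ?_ ?_
    · rw [integrable_prod_iff (hg.1.norm.comp_snd.const_mul Cf)]
      constructor
      · exact Eventually.of_forall fun r => hgint.norm.const_mul Cf
      · have h2 : (fun r : ℝ => ∫ x, ‖Cf * ‖g x‖‖ ∂μ) = fun _ => |Cf| * Cg1 := by
          funext r
          rw [← integral_const_mul]
          congr 1
          funext x
          rw [Real.norm_eq_abs, abs_mul, abs_norm]
        rw [h2]
        exact integrable_const _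
    · exact ((hfm.comp ((hVm t).comp hWmeas)).aestronglyMeasurable).mul
        ((RCLike.continuous_conj.comp_aestronglyMeasurable hg.1).comp_snd)
    · refine Eventually.of_forall fun p => ?_
      rw [norm_mul, RCLike.norm_conj]
      exact mul_le_mul_of_nonneg_right (hFWb p.1 p.2) (norm_nonneg _)
  -- Fubini
  have hFub : (∫ s in Set.Ioc (0:ℝ) σ',
        (∫ x, f (φV t (φW s x)) * (starRingEnd ℂ) (g x) ∂μ))
      = ∫ x, K x * (starRingEnd ℂ) (g x) ∂μ := by
    have hswap := integral_integral_swap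
      (f := fun (s : ℝ) (x : M) => f (φV t (φW s x)) * (starRingEnd ℂ) (g x))
      (μ := volume.restrict (Set.Ioc (0:ℝ) σ')) (ν := μ) hproduct_int
    rw [hswap]
    congr 1
    funext x
    rw [hKdef]
    exact integral_mul_const _ _
  -- bound for the first term
  have hsplit : ∫ x, ‖K x‖ * ‖g x‖ ∂μ ≤ η * Cg1 + (Cf * σ') * (Cg2 * Real.sqrt δ) := by
    have hKg_int : Integrable (fun x => ‖K x‖ * ‖g x‖) μ :=
      hgint.norm.bdd_mul hKsm.measurable.norm.aestronglyMeasurable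
        (Eventually.of_forall fun x => by rw [norm_norm]; exact hKbound x)
    have hEsplit : ∫ x, ‖K x‖ * ‖g x‖ ∂μ
        = (∫ x in E, ‖K x‖ * ‖g x‖ ∂μ) + ∫ x in Eᶜ, ‖K x‖ * ‖g x‖ ∂μ :=
      (integral_add_compl hEmeas hKg_int).symm
    have hEbound : ∫ x in E, ‖K x‖ * ‖g x‖ ∂μ ≤ (Cf * σ') * (Cg2 * Real.sqrt δ) := by
      have h1 : ∫ x in E, ‖K x‖ * ‖g x‖ ∂μ ≤ ∫ x in E, (Cf * σ') * ‖g x‖ ∂μ := by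
        refine setIntegral_mono_on hKg_int.integrableOn
          ((hgint.norm.const_mul _).integrableOn) hEmeas ?_
        intro x _
        exact mul_le_mul_of_nonneg_right (hKbound x) (norm_nonneg _)
      rw [integral_const_mul] at h1
      exact h1.trans (mul_le_mul_of_nonneg_left hCS (by positivity))
    have hEcbound : ∫ x in Eᶜ, ‖K x‖ * ‖g x‖ ∂μ ≤ η * Cg1 := by
      have h1 : ∫ x in Eᶜ, ‖K x‖ * ‖g x‖ ∂μ ≤ ∫ x in Eᶜ, η * ‖g x‖ ∂μ := by
        refine setIntegral_mono_on hKg_int.integrableOn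
          ((hgint.norm.const_mul _).integrableOn) hEmeas.compl ?_
        intro x hx
        have hx2 : ¬ (η ≤ ‖K x‖) := by
          intro hcon
          exact hx (by rw [hEeq]; exact hcon)
        exact mul_le_mul_of_nonneg_right (le_of_not_ge hx2) (norm_nonneg _)
      have h2 : ∫ x in Eᶜ, η * ‖g x‖ ∂μ ≤ η * Cg1 := by
        rw [integral_const_mul]
        refine mul_le_mul_of_nonneg_left ?_ hηpos.le
        exact setIntegral_le_integral hgint.norm
          (Eventually.of_forall fun x => norm_nonneg _)
      exact h1.trans h2
    rw [hEsplit]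
    linarith
  have hI1bound : ‖∫ x, K x * (starRingEnd ℂ) (g x) ∂μ‖
      ≤ η * Cg1 + (Cf * σ') * (Cg2 * Real.sqrt δ) := by
    refine le_trans (norm_integral_le_integral_norm _) (le_trans (le_of_eq ?_) hsplit)
    congr 1
    funext x
    rw [norm_mul, RCLike.norm_conj]
  -- decomposition and bound for the second term
  have hdecomp : ∀ s ∈ Set.Ioc (0:ℝ) σ',
      ‖C - ∫ x, f (φV t (φW s x)) * (starRingEnd ℂ) (g x) ∂μ‖ ≤ Cf * (σ' * Ch1) := by
    intro s hs
    have hJbound : ∀ᵐ x ∂μ, ‖(∫ r in (0:ℝ)..s, h (φW r x))‖ ≤ Habs x := by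
      filter_upwards [hHslice] with x hx
      refine le_trans (intervalIntegral.norm_integral_le_integral_norm hs.1.le) ?_
      rw [intervalIntegral.integral_of_le hs.1.le]
      exact setIntegral_mono_set hx (Eventually.of_forall fun r => norm_nonneg _)
        (HasSubset.Subset.eventuallyLE (Set.Ioc_subset_Ioc_right hs.2))
    have hsm1 : ∀ a b : ℝ, StronglyMeasurable fun x => ∫ r in Set.Ioc a b, h (φW r x) := by
      intro a b
      apply MeasureTheory.StronglyMeasurable.integral_prod_right'
        (f := fun q : M × ℝ => h (φW q.2 q.1))
      exact (hhmeas.comp measurable_swap).stronglyMeasurable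
    have hJsm : AEStronglyMeasurable (fun x => (∫ r in (0:ℝ)..s, h (φW r x))) μ := by
      have heq2 : (fun x => (∫ r in (0:ℝ)..s, h (φW r x)))
          = fun x => ∫ r in Set.Ioc 0 s, h (φW r x) := by
        funext x; exact intervalIntegral.integral_of_le hs.1.le
      rw [heq2]; exact (hsm1 0 s).aestronglyMeasurable
    have hA1 : Integrable (fun x => f (φV t (φW s x)) * (starRingEnd ℂ) (g x)) μ :=
      hgconj_int.bdd_mul (hFWsm s).aestronglyMeasurable (Eventually.of_forall fun x => hFWb s x)
    have hA2 : Integrable (fun x => f (φV t (φW s x)) *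
        (starRingEnd ℂ) (∫ r in (0:ℝ)..s, h (φW r x))) μ := by
      refine Integrable.mono' (hHabs_int.const_mul Cf)
        ((hFWsm s).aestronglyMeasurable.mul
          (RCLike.continuous_conj.comp_aestronglyMeasurable hJsm)) ?_
      filter_upwards [hJbound] with x hx
      rw [norm_mul, RCLike.norm_conj]
      exact mul_le_mul (hFWb s x) hx (norm_nonneg _) hCf
    have heq : C = (∫ x, f (φV t (φW s x)) * (starRingEnd ℂ) (g x) ∂μ)
        + ∫ x, f (φV t (φW s x)) * (starRingEnd ℂ) (∫ r in (0:ℝ)..s, h (φW r x)) ∂μ := by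
      rw [← hIs s, ← integral_add hA1 hA2]
      apply integral_congr_ae
      filter_upwards [hgh s] with x hx
      have hx2 : g (φW s x) = g x + ∫ r in (0:ℝ)..s, h (φW r x) := by
        rw [← hx]; ring
      rw [hx2, map_add, mul_add]
    rw [heq, add_sub_cancel_left]
    refine le_trans (norm_integral_le_of_norm_le (hHabs_int.const_mul Cf) ?_) ?_
    · filter_upwards [hJbound] with x hx
      rw [norm_mul, RCLike.norm_conj]
      exact mul_le_mul (hFWb s x) hx (norm_nonneg _) hCf
    · rw [integral_const_mul, hHabs_val]
  -- the marginal is integrable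
  have hI1int : Integrable
      (fun s : ℝ => ∫ x, f (φV t (φW s x)) * (starRingEnd ℂ) (g x) ∂μ)
      (volume.restrict (Set.Ioc (0:ℝ) σ')) := hproduct_int.integral_prod_left
  -- put it together
  have hconst : (∫ _ in Set.Ioc (0:ℝ) σ', C) = σ' • C := by
    rw [setIntegral_const, Real.volume_real_Ioc, sub_zero, max_eq_left hσ'pos.le]
  have hABdiff : ‖σ' • C - ∫ s in Set.Ioc (0:ℝ) σ',
        (∫ x, f (φV t (φW s x)) * (starRingEnd ℂ) (g x) ∂μ)‖
      ≤ (Cf * (σ' * Ch1)) * σ' := by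
    rw [← hconst, ← integral_sub (integrable_const C) hI1int]
    have h1 : ‖∫ s in Set.Ioc (0:ℝ) σ',
        (C - ∫ x, f (φV t (φW s x)) * (starRingEnd ℂ) (g x) ∂μ)‖
        ≤ (Cf * (σ' * Ch1)) * (volume (Set.Ioc (0:ℝ) σ')).toReal := by
      apply norm_setIntegral_le_of_norm_le_const
      · rw [Real.volume_Ioc]; exact ENNReal.ofReal_lt_top
      · exact fun s hs => hdecomp s hs
    rwa [Real.volume_Ioc, sub_zero, ENNReal.toReal_ofReal hσ'pos.le] at h1
  have hfinal : σ' * ‖C‖ ≤ (η * Cg1 + (Cf * σ') * (Cg2 * Real.sqrt δ))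
      + (Cf * (σ' * Ch1)) * σ' := by
    have h1 : ‖σ' • C‖ ≤ ‖∫ s in Set.Ioc (0:ℝ) σ',
          (∫ x, f (φV t (φW s x)) * (starRingEnd ℂ) (g x) ∂μ)‖
        + ‖σ' • C - ∫ s in Set.Ioc (0:ℝ) σ',
          (∫ x, f (φV t (φW s x)) * (starRingEnd ℂ) (g x) ∂μ)‖ := by
      have h2 := norm_add_le
        (∫ s in Set.Ioc (0:ℝ) σ', (∫ x, f (φV t (φW s x)) * (starRingEnd ℂ) (g x) ∂μ))
        (σ' • C - ∫ s in Set.Ioc (0:ℝ) σ',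
          (∫ x, f (φV t (φW s x)) * (starRingEnd ℂ) (g x) ∂μ))
      rwa [add_sub_cancel] at h2
    rw [norm_smul, Real.norm_of_nonneg hσ'pos.le] at h1
    exact le_trans h1 (add_le_add (hFub ▸ hI1bound) hABdiff)
  -- numeric conclusion
  have hsqrt : Real.sqrt δ = ε / (4 * (Cf + 1) * (Cg2 + 1)) := by
    rw [hδdef, Real.sqrt_sq (by positivity)]
  have hterm1 : η * Cg1 ≤ σ' * (ε / 4) := by
    rw [hηdef, mul_assoc]
    exact mul_le_mul_of_nonneg_left (aux_div_le' hε.le hCg1_nonneg) hσ'pos.le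
  have hterm2 : (Cf * σ') * (Cg2 * Real.sqrt δ) ≤ σ' * (ε / 4) := by
    rw [hsqrt]
    have h2 := aux_div_le (ε := ε) hε.le hCf hCg2_nonneg
    calc (Cf * σ') * (Cg2 * (ε / (4 * (Cf + 1) * (Cg2 + 1))))
        = σ' * (ε / (4 * (Cf + 1) * (Cg2 + 1)) * (Cf * Cg2)) := by ring
      _ ≤ σ' * (ε / 4) := mul_le_mul_of_nonneg_left h2 hσ'pos.le
  have hterm3 : (Cf * (σ' * Ch1)) * σ' ≤ σ' * (ε / 4) := by
    have hσ'le2 : σ' ≤ ε / (4 * (Cf + 1) * (Ch1 + 1)) := min_le_right _ _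
    have h2 := aux_div_le (ε := ε) hε.le hCf hCh1_nonneg
    have h3 : Cf * (σ' * Ch1) ≤ ε / 4 := by
      calc Cf * (σ' * Ch1) ≤ ε / (4 * (Cf + 1) * (Ch1 + 1)) * (Cf * Ch1) := by
            nlinarith [mul_nonneg hCf hCh1_nonneg]
        _ ≤ ε / 4 := h2
    calc (Cf * (σ' * Ch1)) * σ' = σ' * (Cf * (σ' * Ch1)) := by ring
      _ ≤ σ' * (ε / 4) := mul_le_mul_of_nonneg_left h3 hσ'pos.le
  have hnorm : ‖C‖ ≤ 3 * (ε / 4) := by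
    have h1 : σ' * ‖C‖ ≤ σ' * (3 * (ε / 4)) := by linarith
    exact le_of_mul_le_mul_left h1 hσ'pos
  calc ‖C‖ ≤ 3 * (ε / 4) := hnorm
    _ < ε := by linarith
end

section
/- (Infinitesimal pushforward along a time-changed flow.) Let E be a real normed vector space, let V, Z : E → E be C¹ vector fields, and let c : E → ℝ be a continuous function such that [V, Z](x) = c(x) · V(x) for all x ∈ E. Let φ^V, φ^Z : ℝ × E → E be global flows of V and Z respectively, i.e., φ^V(0,x) = x, ∂_t φ^V(t,x) = V(φ^V(t,x)), φ^Z(0,x) = x, ∂_s φ^Z(s,x) = Z(φ^Z(s,x)), and assume x ↦ φ^V(t,x) is differentiable for each t. Then for every t ∈ ℝ and x ∈ E, the map s ↦ φ^V(t, φ^Z(s, x)) is differentiable at s = 0 with derivative Z(φ^V(t,x)) − ( ∫₀^t c(φ^V(τ, x)) dτ ) · V(φ^V(t,x)). Equivalently, the pushforward of Z by φ^V_t at φ^V_t(x) equals Z(φ^V_t(x)) − ( ∫₀^t c(φ^V_τ(x)) dτ ) V(φ^V_t(x)). -/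
open Set Metric Real intervalIntegral

theorem gb_lin (K e x : ℝ) : gronwallBound 0 K e x = e * gronwallBound 0 K 1 x := by
  rcases eq_or_ne K 0 with h | h
  · simp [gronwallBound, h]
  · rw [gronwallBound_of_K_ne_0 h, gronwallBound_of_K_ne_0 h]; simp; ring

theorem gb_mono {K e : ℝ} (hK : 0 ≤ K) (he : 0 ≤ e) {x y : ℝ} (hxy : x ≤ y) :
    gronwallBound 0 K e x ≤ gronwallBound 0 K e y := by
  rcases eq_or_ne K 0 with h | h
  · simp [gronwallBound, h]; nlinarith
  · rw [gronwallBound_of_K_ne_0 h]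
    have hK' : 0 < K := lt_of_le_of_ne hK (Ne.symm h)
    have h1 : Real.exp (K * x) ≤ Real.exp (K * y) := Real.exp_le_exp.2 (by nlinarith)
    have h2 : 0 ≤ e / K := div_nonneg he hK
    simp only
    nlinarith

theorem gb_nonneg {K e t : ℝ} (hK : 0 ≤ K) (he : 0 ≤ e) (ht : 0 ≤ t) :
    0 ≤ gronwallBound 0 K e t := by
  have := gb_mono hK he ht
  rwa [gronwallBound_x0] at this

set_option maxHeartbeats 2000000 in
theorem key {E : Type*} [NormedAddCommGroup E] [NormedSpace ℝ E]
    (V Z : E → E) (hV : ContDiff ℝ 1 V) (hZdiff : Differentiable ℝ Z)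
    (c : E → ℝ) (hc : Continuous c)
    (hbr : ∀ x : E, fderiv ℝ Z x (V x) - fderiv ℝ V x (Z x) = c x • V x)
    (φV : ℝ → E → E)
    (hφV0 : ∀ x : E, φV 0 x = x)
    (hφVd : ∀ (t : ℝ) (x : E), HasDerivAt (fun τ : ℝ => φV τ x) (V (φV t x)) t)
    (x : E) (t₀ : ℝ) (ht₀ : 0 ≤ t₀) :
    HasDerivAt (fun h : ℝ => φV t₀ (x + h • Z x))
      (Z (φV t₀ x) - (∫ τ in (0:ℝ)..t₀, c (φV τ x)) • V (φV t₀ x)) 0 := by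
  have hVdiff : Differentiable ℝ V := hV.differentiable one_ne_zero
  set γ : ℝ → E := fun t => φV t x with hγdef
  have hγd : ∀ t, HasDerivAt γ (V (γ t)) t := fun t => hφVd t x
  have hγc : Continuous γ :=
    Differentiable.continuous (fun t => (hγd t).differentiableAt)
  have hγ0 : γ 0 = x := hφV0 x
  set Y : ℝ → E := fun t => Z (γ t) - (∫ τ in (0:ℝ)..t, c (γ τ)) • V (γ t) with hYdef
  have hInt : ∀ t, HasDerivAt (fun u => ∫ τ in (0:ℝ)..u, c (γ τ)) (c (γ t)) t :=
    fun t => ((hc.comp hγc).integral_hasStrictDerivAt 0 t).hasDerivAt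
  have hYd : ∀ t, HasDerivAt Y (fderiv ℝ V (γ t) (Y t)) t := by
    intro t
    have h1 : HasDerivAt (fun u => Z (γ u)) (fderiv ℝ Z (γ t) (V (γ t))) t :=
      (hZdiff (γ t)).hasFDerivAt.comp_hasDerivAt t (hγd t)
    have h3 : HasDerivAt (fun u => V (γ u)) (fderiv ℝ V (γ t) (V (γ t))) t :=
      (hVdiff (γ t)).hasFDerivAt.comp_hasDerivAt t (hγd t)
    have h4 := h1.sub ((hInt t).smul h3)
    convert h4 using 1
    · rfl
    have hb := hbr (γ t)
    simp only [hYdef, map_sub, map_smul]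
    have hb' : fderiv ℝ V (γ t) (Z (γ t)) = fderiv ℝ Z (γ t) (V (γ t)) - c (γ t) • V (γ t) := by
      rw [← hb]; abel
    rw [hb']; abel
  have hYc : Continuous Y :=
    Differentiable.continuous (fun t => (hYd t).differentiableAt)
  -- compact image and bounds on fderiv V near it
  have hS : IsCompact (γ '' Icc 0 t₀) := isCompact_Icc.image hγc
  have hfdc : Continuous (fderiv ℝ V) := hV.continuous_fderiv one_ne_zero
  obtain ⟨K, hK⟩ := hS.exists_bound_of_continuousOn hfdc.continuousOn
  have hK0 : 0 ≤ K := le_trans (norm_nonneg _) (hK (γ 0) ⟨0, ⟨le_rfl, ht₀⟩, rfl⟩)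
  have hUopen : IsOpen {y | ‖fderiv ℝ V y‖ < K + 1} := isOpen_lt hfdc.norm continuous_const
  have hSU : γ '' Icc 0 t₀ ⊆ {y | ‖fderiv ℝ V y‖ < K + 1} := fun y hy =>
    lt_of_le_of_lt (hK y hy) (by linarith)
  obtain ⟨ε, hε, hthick⟩ := hS.exists_thickening_subset_open hUopen hSU
  have hTU : cthickening (ε/2) (γ '' Icc 0 t₀) ⊆ {y | ‖fderiv ℝ V y‖ < K + 1} :=
    (Metric.cthickening_subset_thickening' hε (by linarith) _).trans hthick
  -- clamp
  set θ : ℝ → ℝ := fun t => min (max t 0) t₀ with hθdef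
  have hθIcc : ∀ t, θ t ∈ Icc 0 t₀ := fun t =>
    ⟨le_min (le_max_right _ _) ht₀, min_le_right _ _⟩
  have hθeq : ∀ t ∈ Icc 0 t₀, θ t = t := fun t ht => by
    simp [hθdef, max_eq_left ht.1, min_eq_left ht.2]
  have hballT : ∀ t, closedBall (γ (θ t)) (ε/2) ⊆ cthickening (ε/2) (γ '' Icc 0 t₀) := by
    intro t y hy
    exact Metric.mem_cthickening_of_dist_le y (γ (θ t)) _ _ ⟨θ t, hθIcc t, rfl⟩
      (mem_closedBall.1 hy)
  set Knn : NNReal := ⟨K + 1, by linarith⟩ with hKnn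
  have hlip : ∀ t : ℝ, LipschitzOnWith Knn V (closedBall (γ (θ t)) (ε/2)) := by
    intro t
    apply (convex_closedBall _ _).lipschitzOnWith_of_nnnorm_fderiv_le
      (fun y _ => hVdiff y)
    intro y hy
    have : ‖fderiv ℝ V y‖ < K + 1 := hTU (hballT t hy)
    exact_mod_cast this.le
  have hUC : ∀ η' > (0:ℝ), ∃ r > (0:ℝ), ∀ p ∈ γ '' Icc 0 t₀, ∀ ξ : E, dist p ξ < r →
      dist (fderiv ℝ V p) (fderiv ℝ V ξ) < η' := by
    intro η' hη'
    have hmem : {q : (E →L[ℝ] E) × (E →L[ℝ] E) | dist q.1 q.2 < η'} ∈ uniformity (E →L[ℝ] E) :=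
      Metric.dist_mem_uniformity hη'
    have h2 := hS.uniformContinuousAt_of_continuousAt (fderiv ℝ V)
      (fun a _ => hfdc.continuousAt) hmem
    rw [Metric.mem_uniformity_dist] at h2
    obtain ⟨r, hr, hprop⟩ := h2
    exact ⟨r, hr, fun p hp ξ hd => hprop hd hp⟩
  -- bound on Y
  obtain ⟨M₀, hM₀⟩ := isCompact_Icc.exists_bound_of_continuousOn hYc.continuousOn
  set M : ℝ := max M₀ 1 with hMdef
  have hM : ∀ t ∈ Icc 0 t₀, ‖Y t‖ ≤ M := fun t ht => (hM₀ t ht).trans (le_max_left _ _)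
  have hM1 : (1:ℝ) ≤ M := le_max_right _ _
  have hMpos : (0:ℝ) < M := lt_of_lt_of_le one_pos hM1
  set C₀ : ℝ := gronwallBound 0 (Knn : ℝ) 1 t₀ with hC₀def
  have hC₀ : 0 ≤ C₀ := gb_nonneg (by positivity) zero_le_one ht₀
  -- main estimate
  rw [hasDerivAt_iff_isLittleO, Asymptotics.isLittleO_iff]
  intro c' hc'
  set η : ℝ := c' / (M * C₀ + 1) with hηdef
  have hηpos : 0 < η := div_pos hc' (by positivity)
  obtain ⟨r, hr, hrprop⟩ := hUC η hηpos
  set h₀ : ℝ := min (r / M) ((ε/2) / (η * M * C₀ + M + 1)) with hh₀def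
  have hh₀pos : 0 < h₀ := lt_min (by positivity) (by positivity)
  have hev : ∀ᶠ h in nhds (0:ℝ), |h| < h₀ := by
    have := eventually_abs_sub_lt (0:ℝ) hh₀pos
    simpa using this
  filter_upwards [hev] with h hh
  simp only [zero_smul, add_zero, sub_zero, zero_sub, sub_neg_eq_add]
  -- abbreviations
  set f : ℝ → E := fun t => φV t (x + h • Z x) with hfdef
  set g : ℝ → E := fun t => γ t + h • Y t with hgdef
  have hfd : ∀ t, HasDerivAt f (V (f t)) t := fun t => hφVd t _
  have hfc : Continuous f :=
    Differentiable.continuous (fun t => (hfd t).differentiableAt)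
  have hgd : ∀ t, HasDerivAt g (V (γ t) + h • fderiv ℝ V (γ t) (Y t)) t :=
    fun t => (hγd t).add ((hYd t).const_smul h)
  have hgc : Continuous g :=
    Differentiable.continuous (fun t => (hgd t).differentiableAt)
  have hhM_r : |h| * M < r := by
    have : |h| < r / M := lt_of_lt_of_le hh (min_le_left _ _)
    calc |h| * M < (r / M) * M := by exact mul_lt_mul_of_pos_right this hMpos
    _ = r := div_mul_cancel₀ r (ne_of_gt hMpos)
  have hhsmall : η * M * |h| * C₀ + |h| * M < ε / 2 := by
    have h1 : |h| < (ε/2) / (η * M * C₀ + M + 1) := lt_of_lt_of_le hh (min_le_right _ _)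
    have h2 : |h| * (η * M * C₀ + M + 1) < ε/2 := by
      rw [← lt_div_iff₀ (by positivity)]; exact h1
    nlinarith [abs_nonneg h]
  have hhM_eps : |h| * M ≤ ε / 2 := by nlinarith [abs_nonneg h, mul_nonneg (mul_nonneg (mul_nonneg hηpos.le hMpos.le) (abs_nonneg h)) hC₀]
  -- initial condition
  have hinit : dist (f 0) (g 0) ≤ 0 := by
    have : f 0 = g 0 := by
      simp only [hfdef, hgdef, hφV0, hγ0, hYdef, intervalIntegral.integral_same, zero_smul,
        sub_zero]
    simp [this]
  -- error bound for g
  have hgbound : ∀ t ∈ Icc 0 t₀, dist (V (γ t) + h • fderiv ℝ V (γ t) (Y t)) (V (g t))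
      ≤ η * (M * |h|) := by
    intro t ht
    have hab : γ t + h • Y t ∈ closedBall (γ t) (|h| * M) := by
      simp only [mem_closedBall, dist_self_add_left, norm_smul, Real.norm_eq_abs]
      exact mul_le_mul_of_nonneg_left (hM t ht) (abs_nonneg h)
    have haa : γ t ∈ closedBall (γ t) (|h| * M) := mem_closedBall_self (by positivity)
    have hsub : closedBall (γ t) (|h| * M) ⊆ closedBall (γ (θ t)) (ε/2) := by
      rw [hθeq t ht]
      exact closedBall_subset_closedBall hhM_eps
    have hbound : ∀ ξ ∈ closedBall (γ t) (|h| * M),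
        ‖fderiv ℝ V ξ - fderiv ℝ V (γ t)‖ ≤ η := by
      intro ξ hξ
      have hd : dist (γ t) ξ < r := by
        rw [dist_comm]; exact lt_of_le_of_lt (mem_closedBall.1 hξ) hhM_r
      have h5 := hrprop (γ t) ⟨t, ht, rfl⟩ ξ hd
      rw [dist_comm, dist_eq_norm] at h5
      exact h5.le
    have := Convex.norm_image_sub_le_of_norm_fderiv_le' (f := V)
      (fun ξ _ => hVdiff ξ) hbound (convex_closedBall _ _) haa hab
    rw [dist_eq_norm]
    calc ‖V (γ t) + h • fderiv ℝ V (γ t) (Y t) - V (g t)‖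
        = ‖V (γ t + h • Y t) - V (γ t) - fderiv ℝ V (γ t) (γ t + h • Y t - γ t)‖ := by
          simp only [hgdef, add_sub_cancel_left, map_smul]
          rw [← norm_neg]; congr 1; abel
      _ ≤ η * ‖γ t + h • Y t - γ t‖ := this
      _ ≤ η * (M * |h|) := by
          simp only [add_sub_cancel_left, norm_smul, Real.norm_eq_abs]
          rw [mul_comm M |h|]
          exact mul_le_mul_of_nonneg_left
            (mul_le_mul_of_nonneg_left (hM t ht) (abs_nonneg h)) hηpos.le
  -- the Grönwall wrapper
  have gron : ∀ T ∈ Icc 0 t₀, (∀ τ ∈ Ico 0 T, dist (f τ) (γ τ) ≤ ε/2) →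
      dist (f T) (g T) ≤ η * (M * |h|) * C₀ := by
    intro T hT hmem
    have hIccT : Icc 0 T ⊆ Icc 0 t₀ := Icc_subset_Icc le_rfl hT.2
    have hIcoT : Ico 0 T ⊆ Icc 0 t₀ := fun τ hτ => ⟨hτ.1, hτ.2.le.trans hT.2⟩
    have := dist_le_of_approx_trajectories_ODE_of_mem
      (v := fun _ y => V y) (s := fun t => closedBall (γ (θ t)) (ε/2)) (K := Knn)
      (fun t _ => hlip t)
      (hfc.continuousOn)
      (fun t _ => (hfd t).hasDerivWithinAt)
      (εf := 0) (fun t _ => by simp)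
      (fun t ht' => by
        show f t ∈ closedBall (γ (θ t)) (ε/2)
        rw [hθeq t (hIcoT ht'), mem_closedBall]; exact hmem t ht')
      (hgc.continuousOn)
      (fun t _ => (hgd t).hasDerivWithinAt)
      (fun t ht' => hgbound t (hIcoT ht'))
      (fun t ht' => by
        show g t ∈ closedBall (γ (θ t)) (ε/2)
        rw [hθeq t (hIcoT ht'), mem_closedBall]
        have hge : dist (g t) (γ t) = |h| * ‖Y t‖ := by
          simp [hgdef, dist_eq_norm, add_sub_cancel_left, norm_smul]
        rw [hge]
        calc |h| * ‖Y t‖ ≤ |h| * M :=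
              mul_le_mul_of_nonneg_left (hM t (hIcoT ht')) (abs_nonneg h)
          _ ≤ ε/2 := hhM_eps)
      hinit
      T ⟨hT.1, le_rfl⟩
    rw [zero_add, sub_zero] at this
    calc dist (f T) (g T) ≤ gronwallBound 0 (Knn:ℝ) (η * (M * |h|)) T := this
      _ ≤ gronwallBound 0 (Knn:ℝ) (η * (M * |h|)) t₀ :=
          gb_mono (by positivity) (by positivity) hT.2
      _ = η * (M * |h|) * C₀ := by rw [gb_lin]
  -- no escape
  have hclose : ∀ τ ∈ Icc 0 t₀, dist (f τ) (γ τ) ≤ ε/2 := by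
    by_contra hcon
    push_neg at hcon
    obtain ⟨τ₁, hτ₁, hτ₁'⟩ := hcon
    set A : Set ℝ := {τ | τ ∈ Icc 0 t₀ ∧ ε/2 < dist (f τ) (γ τ)} with hAdef
    have hAne : A.Nonempty := ⟨τ₁, hτ₁, hτ₁'⟩
    have hAbdd : BddBelow A := ⟨0, fun a ha => ha.1.1⟩
    set T' : ℝ := sInf A with hT'def
    have hT'cl : T' ∈ closure A := (isGLB_csInf hAne hAbdd).mem_closure hAne
    have hT'Icc : T' ∈ Icc 0 t₀ :=
      ⟨le_csInf hAne fun a ha => ha.1.1, (csInf_le hAbdd ⟨hτ₁, hτ₁'⟩).trans hτ₁.2⟩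
    have h1 : ε/2 ≤ dist (f T') (γ T') := by
      have hsub : closure A ⊆ {τ | ε/2 ≤ dist (f τ) (γ τ)} :=
        closure_minimal (fun a ha => ha.2.le)
          (isClosed_le continuous_const ((hfc.dist hγc)))
      exact hsub hT'cl
    have h2 : ∀ τ ∈ Ico 0 T', dist (f τ) (γ τ) ≤ ε/2 := by
      intro τ hτ
      by_contra hgt
      push_neg at hgt
      have : τ ∈ A := ⟨⟨hτ.1, hτ.2.le.trans hT'Icc.2⟩, hgt⟩
      exact absurd (csInf_le hAbdd this) (not_le.2 hτ.2)
    have h3 := gron T' hT'Icc h2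
    have h4 : dist (f T') (γ T') ≤ η * (M * |h|) * C₀ + |h| * M := by
      calc dist (f T') (γ T') ≤ dist (f T') (g T') + dist (g T') (γ T') := dist_triangle _ _ _
        _ ≤ η * (M * |h|) * C₀ + |h| * M := by
            apply add_le_add h3
            have hge : dist (g T') (γ T') = |h| * ‖Y T'‖ := by
              simp [hgdef, dist_eq_norm, add_sub_cancel_left, norm_smul]
            rw [hge]
            exact mul_le_mul_of_nonneg_left (hM T' hT'Icc) (abs_nonneg h)
    have : dist (f T') (γ T') < ε/2 := by
      apply lt_of_le_of_lt h4
      calc η * (M * |h|) * C₀ + |h| * M = η * M * |h| * C₀ + |h| * M := by ring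
        _ < ε/2 := hhsmall
    linarith
  have hfinal := gron t₀ ⟨ht₀, le_rfl⟩ fun τ hτ => hclose τ ⟨hτ.1, hτ.2.le⟩
  -- conclude
  have heq : φV t₀ (x + h • Z x) - φV t₀ x - h •
      (Z (φV t₀ x) - (∫ τ in (0:ℝ)..t₀, c (φV τ x)) • V (φV t₀ x)) = f t₀ - g t₀ := by
    simp only [hfdef, hgdef, hYdef, hγdef]
    abel
  rw [Real.norm_eq_abs]
  calc ‖φV t₀ (x + h • Z x) - φV t₀ x - h •
      (Z (φV t₀ x) - (∫ τ in (0:ℝ)..t₀, c (φV τ x)) • V (φV t₀ x))‖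
      = dist (f t₀) (g t₀) := by rw [heq, dist_eq_norm]
    _ ≤ η * (M * |h|) * C₀ := hfinal
    _ ≤ c' * |h| := by
        rw [hηdef, div_mul_eq_mul_div, div_mul_eq_mul_div, div_le_iff₀ (by positivity : (0:ℝ) < M * C₀ + 1)]
        nlinarith [abs_nonneg h, hc'.le, hC₀, hMpos.le, mul_nonneg hc'.le (abs_nonneg h)]

set_option maxHeartbeats 800000 in
theorem key2 {E : Type*} [NormedAddCommGroup E] [NormedSpace ℝ E]
    (V Z : E → E) (hV : ContDiff ℝ 1 V) (hZdiff : Differentiable ℝ Z)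
    (c : E → ℝ) (hc : Continuous c)
    (hbr : ∀ x : E, fderiv ℝ Z x (V x) - fderiv ℝ V x (Z x) = c x • V x)
    (φV : ℝ → E → E)
    (hφV0 : ∀ x : E, φV 0 x = x)
    (hφVd : ∀ (t : ℝ) (x : E), HasDerivAt (fun τ : ℝ => φV τ x) (V (φV t x)) t)
    (x : E) (t : ℝ) :
    HasDerivAt (fun h : ℝ => φV t (x + h • Z x))
      (Z (φV t x) - (∫ τ in (0:ℝ)..t, c (φV τ x)) • V (φV t x)) 0 := by
  rcases le_total 0 t with h | h
  · exact key V Z hV hZdiff c hc hbr φV hφV0 hφVd x t h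
  · have hbr' : ∀ y : E, fderiv ℝ Z y ((fun z => -V z) y) - fderiv ℝ (fun z => -V z) y (Z y)
        = c y • (fun z => -V z) y := by
      intro y
      have h1 : fderiv ℝ (fun z => -V z) y = -fderiv ℝ V y := fderiv_neg
      rw [h1]
      simp only [ContinuousLinearMap.neg_apply, map_neg, smul_neg]
      rw [← hbr y]; abel
    have hφ0' : ∀ y : E, φV (-0) y = y := by simpa using hφV0
    have hφd' : ∀ (s : ℝ) (y : E), HasDerivAt (fun τ : ℝ => φV (-τ) y)
        ((fun z => -V z) (φV (-s) y)) s := by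
      intro s y
      have h2 := (hφVd (-s) y).scomp s (hasDerivAt_neg s)
      simpa [Function.comp_def] using h2
    have hk := key (fun z => -V z) Z hV.neg hZdiff c hc hbr' (fun τ y => φV (-τ) y)
      hφ0' hφd' x (-t) (by linarith)
    have hI : (∫ τ in (0:ℝ)..(-t), c (φV (-τ) x)) = -∫ τ in (0:ℝ)..t, c (φV τ x) := by
      rw [intervalIntegral.integral_comp_neg (fun τ => c (φV τ x))]
      rw [neg_zero, intervalIntegral.integral_symm]
      rw [neg_neg]
    simp only [neg_neg] at hk
    rw [hI] at hk
    simpa [neg_smul, smul_neg, neg_neg] using hk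



/-- **Infinitesimal pushforward along a time-changed flow.**
Let `V, Z` be `C¹` vector fields on a real normed vector space `E` and `c : E → ℝ`
continuous with `[V, Z] = c • V` pointwise, where
`[V, Z](x) = DZ(x)[V(x)] - DV(x)[Z(x)]`.  Let `φV, φZ` be global flows of `V, Z`,
and assume `x ↦ φV t x` is differentiable for each `t`.  Then for every `t` and `x`
the curve `s ↦ φV t (φZ s x)` is differentiable at `s = 0` with derivative
`Z(φV t x) - (∫₀^t c(φV τ x) dτ) • V(φV t x)`; i.e. the pushforward of `Z` by `φV_t`
at `φV_t x` equals `Z - (∫₀^t c ∘ φV_τ dτ) V` there. -/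
theorem infinitesimal_pushforward
    {E : Type*} [NormedAddCommGroup E] [NormedSpace ℝ E]
    (V Z : E → E) (hV : ContDiff ℝ 1 V) (hZ : ContDiff ℝ 1 Z)
    (c : E → ℝ) (hc : Continuous c)
    (hbr : ∀ x : E, fderiv ℝ Z x (V x) - fderiv ℝ V x (Z x) = c x • V x)
    (φV φZ : ℝ → E → E)
    (hφV0 : ∀ x : E, φV 0 x = x)
    (hφVd : ∀ (t : ℝ) (x : E), HasDerivAt (fun τ : ℝ => φV τ x) (V (φV t x)) t)
    (hφZ0 : ∀ x : E, φZ 0 x = x)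
    (hφZd : ∀ (s : ℝ) (x : E), HasDerivAt (fun σ : ℝ => φZ σ x) (Z (φZ s x)) s)
    (hφVdiff : ∀ t : ℝ, Differentiable ℝ (φV t)) :
    ∀ (t : ℝ) (x : E),
      HasDerivAt (fun s : ℝ => φV t (φZ s x))
        (Z (φV t x) - (∫ τ in (0:ℝ)..t, c (φV τ x)) • V (φV t x)) 0 := by
  intro t x
  have hZdiff : Differentiable ℝ Z := hZ.differentiable one_ne_zero
  have hkd := key2 V Z hV hZdiff c hc hbr φV hφV0 hφVd x t
  have hF : HasFDerivAt (φV t) (fderiv ℝ (φV t) x) x := (hφVdiff t x).hasFDerivAt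
  have hline : HasDerivAt (fun h : ℝ => x + h • Z x) (Z x) 0 := by
    simpa using ((hasDerivAt_id (0:ℝ)).smul_const (Z x)).const_add x
  have hF0 : HasFDerivAt (φV t) (fderiv ℝ (φV t) x) (x + (0:ℝ) • Z x) := by
    simpa using hF
  have comp1 : HasDerivAt (fun h : ℝ => φV t (x + h • Z x)) (fderiv ℝ (φV t) x (Z x)) 0 :=
    hF0.comp_hasDerivAt 0 hline
  have huniq : fderiv ℝ (φV t) x (Z x)
      = Z (φV t x) - (∫ τ in (0:ℝ)..t, c (φV τ x)) • V (φV t x) :=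
    comp1.unique hkd
  have hcurve : HasDerivAt (fun s : ℝ => φZ s x) (Z x) 0 := by
    have h3 := hφZd 0 x
    rwa [hφZ0 x] at h3
  have hFz : HasFDerivAt (φV t) (fderiv ℝ (φV t) x) (φZ 0 x) := by
    rw [hφZ0 x]; exact hF
  have comp2 : HasDerivAt (fun s : ℝ => φV t (φZ s x)) (fderiv ℝ (φV t) x (Z x)) 0 :=
    hFz.comp_hasDerivAt 0 hcurve
  rwa [huniq] at comp2
end

section
/- Let B ⊆ ℝ be a Lebesgue measurable set, let ℓ ≥ 1 be an integer, let δ ∈ (0, 1/ℓ), and let T > 0 be such that Leb(B ∩ (0, jT)) ≤ δ j T for every j = 1, …, ℓ. Then the set of t₀ ∈ (0, T) such that j t₀ ∉ B for all j = 1, …, ℓ has Lebesgue measure at least T(1 − δℓ) > 0; in particular such a t₀ exists. -/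
open MeasureTheory

/-- **Finding a good arithmetic progression of times.**
Let `B ⊆ ℝ` be Lebesgue measurable, `ℓ ≥ 1` an integer, `δ ∈ (0, 1/ℓ)` and `T > 0`
with `Leb(B ∩ (0, jT)) ≤ δ j T` for every `j = 1, …, ℓ`.  Then the set of
`t₀ ∈ (0, T)` with `j t₀ ∉ B` for all `j = 1, …, ℓ` has Lebesgue measure at least
`T(1 - δℓ) > 0`; in particular such a `t₀` exists. -/
theorem exists_good_arithmetic_progression_base
    (B : Set ℝ) (hBm : MeasurableSet B)
    (ℓ : ℕ) (hℓ : 1 ≤ ℓ) (δ : ℝ) (hδ : δ ∈ Set.Ioo (0:ℝ) (1 / (ℓ : ℝ)))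
    (T : ℝ) (hT : 0 < T)
    (h : ∀ j : ℕ, 1 ≤ j → j ≤ ℓ →
      volume (B ∩ Set.Ioo (0:ℝ) ((j : ℝ) * T)) ≤ ENNReal.ofReal (δ * (j : ℝ) * T)) :
    0 < T * (1 - δ * (ℓ : ℝ)) ∧
    ENNReal.ofReal (T * (1 - δ * (ℓ : ℝ))) ≤
      volume {t₀ ∈ Set.Ioo (0:ℝ) T | ∀ j : ℕ, 1 ≤ j → j ≤ ℓ → (j : ℝ) * t₀ ∉ B} ∧
    ∃ t₀ ∈ Set.Ioo (0:ℝ) T, ∀ j : ℕ, 1 ≤ j → j ≤ ℓ → (j : ℝ) * t₀ ∉ B := by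
  obtain ⟨hδ0, hδℓ⟩ := hδ
  have hℓpos : (0:ℝ) < ℓ := by exact_mod_cast hℓ
  have hδℓ1 : δ * ℓ < 1 := by
    rw [one_div] at hδℓ
    calc δ * ℓ < (ℓ:ℝ)⁻¹ * ℓ := mul_lt_mul_of_pos_right hδℓ hℓpos
    _ = 1 := inv_mul_cancel₀ hℓpos.ne'
  have hpos : 0 < T * (1 - δ * (ℓ : ℝ)) := by nlinarith
  refine ⟨hpos, ?_⟩
  set good := {t₀ ∈ Set.Ioo (0:ℝ) T | ∀ j : ℕ, 1 ≤ j → j ≤ ℓ → (j : ℝ) * t₀ ∉ B} with hgood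
  have key : ENNReal.ofReal (T * (1 - δ * (ℓ : ℝ))) ≤ volume good := by
    set U : Set ℝ :=
      ⋃ j ∈ Finset.Icc 1 ℓ, (((fun t => (j:ℝ) * t) ⁻¹' B) ∩ Set.Ioo (0:ℝ) T) with hU
    have hcover : Set.Ioo (0:ℝ) T ⊆ good ∪ U := by
      intro t ht
      by_cases hg : ∀ j : ℕ, 1 ≤ j → j ≤ ℓ → (j : ℝ) * t ∉ B
      · exact Or.inl ⟨ht, hg⟩
      · push_neg at hg
        obtain ⟨j, hj1, hj2, hjB⟩ := hg
        exact Or.inr (Set.mem_biUnion (Finset.mem_Icc.mpr ⟨hj1, hj2⟩) ⟨hjB, ht⟩)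
    have hUvol : volume U ≤ ENNReal.ofReal ((ℓ:ℝ) * (δ * T)) := by
      have hone : ∀ j ∈ Finset.Icc 1 ℓ,
          volume (((fun t => (j:ℝ) * t) ⁻¹' B) ∩ Set.Ioo (0:ℝ) T)
            ≤ ENNReal.ofReal (δ * T) := by
        intro j hj
        obtain ⟨hj1, hj2⟩ := Finset.mem_Icc.mp hj
        have hjpos : (0:ℝ) < j := by exact_mod_cast hj1
        have hjT : (1:ℝ) ≤ j := by exact_mod_cast hj1
        have hsub : ((fun t => (j:ℝ) * t) ⁻¹' B) ∩ Set.Ioo (0:ℝ) T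
            ⊆ (fun t => (j:ℝ) * t) ⁻¹' (B ∩ Set.Ioo 0 ((j:ℝ) * T)) := by
          rintro t ⟨htB, ht0, htT⟩
          exact ⟨htB, mul_pos hjpos ht0, mul_lt_mul_of_pos_left htT hjpos⟩
        calc volume (((fun t => (j:ℝ) * t) ⁻¹' B) ∩ Set.Ioo (0:ℝ) T)
            ≤ volume ((fun t => (j:ℝ) * t) ⁻¹' (B ∩ Set.Ioo 0 ((j:ℝ) * T))) :=
              measure_mono hsub
          _ = ENNReal.ofReal |((j:ℝ))⁻¹| * volume (B ∩ Set.Ioo 0 ((j:ℝ) * T)) :=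
              Real.volume_preimage_mul_left hjpos.ne' _
          _ ≤ ENNReal.ofReal ((j:ℝ))⁻¹ * ENNReal.ofReal (δ * (j:ℝ) * T) := by
              rw [abs_of_pos (inv_pos.mpr hjpos)]
              exact mul_le_mul_right (h j hj1 hj2) _
          _ = ENNReal.ofReal ((j:ℝ)⁻¹ * (δ * (j:ℝ) * T)) :=
              (ENNReal.ofReal_mul (by positivity)).symm
          _ = ENNReal.ofReal (δ * T) := by
              congr 1; field_simp
      calc volume U ≤ ∑ j ∈ Finset.Icc 1 ℓ,
            volume (((fun t => (j:ℝ) * t) ⁻¹' B) ∩ Set.Ioo (0:ℝ) T) :=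
              measure_biUnion_finset_le _ _
        _ ≤ ∑ _j ∈ Finset.Icc 1 ℓ, ENNReal.ofReal (δ * T) := Finset.sum_le_sum hone
        _ = (ℓ : ℕ) • ENNReal.ofReal (δ * T) := by
              rw [Finset.sum_const, Nat.card_Icc, Nat.add_sub_cancel]
        _ = ENNReal.ofReal ((ℓ:ℝ) * (δ * T)) := by
              rw [nsmul_eq_mul, ← ENNReal.ofReal_natCast,
                ← ENNReal.ofReal_mul (by positivity)]
    have hIoo : ENNReal.ofReal T ≤ volume good + volume U := by
      calc ENNReal.ofReal T = volume (Set.Ioo (0:ℝ) T) := by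
            rw [Real.volume_Ioo, sub_zero]
        _ ≤ volume (good ∪ U) := measure_mono hcover
        _ ≤ volume good + volume U := measure_union_le _ _
    have : ENNReal.ofReal (T * (1 - δ * (ℓ : ℝ)))
        = ENNReal.ofReal T - ENNReal.ofReal ((ℓ:ℝ) * (δ * T)) := by
      rw [← ENNReal.ofReal_sub _ (by positivity)]
      congr 1; ring
    rw [this]
    rw [tsub_le_iff_right]
    calc ENNReal.ofReal T ≤ volume good + volume U := hIoo
      _ ≤ volume good + ENNReal.ofReal ((ℓ:ℝ) * (δ * T)) := add_le_add_right hUvol _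
  refine ⟨key, ?_⟩
  have hne : volume good ≠ 0 := by
    intro h0
    rw [h0] at key
    exact absurd (le_antisymm key zero_le)
      (by simp [ENNReal.ofReal_eq_zero, not_le, hpos])
  obtain ⟨t₀, ht₀⟩ := nonempty_of_measure_ne_zero hne
  exact ⟨t₀, ht₀.1, ht₀.2⟩
end

section
/- (Phase avoidance for nearly linear phases.) Let η ∈ (0, 1/2), T > 0, S > 0, λ > 0, θ ∈ (0, π/2], and a ∈ ℝ. Let R : [0, S] → ℝ be differentiable with (1−η)T ≤ R′(s) ≤ (1+η)T for all s ∈ [0, S]. Then the Lebesgue measure of the set {s ∈ [0, S] : dist(2πλ R(s) − a, 2πℤ) ≤ θ} is at most (θ(1+η))/(π(1−η)) · (S + 4/(λT)). -/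
open MeasureTheory

set_option maxHeartbeats 1000000 in
/-- **Phase avoidance for nearly linear phases.**
Let `η ∈ (0, 1/2)`, `T, S, λ > 0`, `θ ∈ (0, π/2]` and `a ∈ ℝ`.  If `R : [0,S] → ℝ` is
differentiable with `(1-η)T ≤ R'(s) ≤ (1+η)T` on `[0,S]`, then the set of `s ∈ [0,S]`
whose phase `2πλR(s) - a` lies within distance `θ` of `2πℤ` has Lebesgue measure at
most `(θ(1+η))/(π(1-η)) · (S + 4/(λT))`. -/
theorem phase_avoidance_nearly_linear
    (η T S lam θ a : ℝ)
    (hη : η ∈ Set.Ioo (0:ℝ) (1/2)) (hT : 0 < T) (hS : 0 < S) (hlam : 0 < lam)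
    (hθ : θ ∈ Set.Ioc 0 (Real.pi / 2))
    (R R' : ℝ → ℝ)
    (hR : ∀ s ∈ Set.Icc (0:ℝ) S, HasDerivWithinAt R (R' s) (Set.Icc (0:ℝ) S) s)
    (hR' : ∀ s ∈ Set.Icc (0:ℝ) S, (1 - η) * T ≤ R' s ∧ R' s ≤ (1 + η) * T) :
    volume {s ∈ Set.Icc (0:ℝ) S |
        ∃ k : ℤ, |2 * Real.pi * lam * R s - a - 2 * Real.pi * (k : ℝ)| ≤ θ}
      ≤ ENNReal.ofReal ((θ * (1 + η)) / (Real.pi * (1 - η)) * (S + 4 / (lam * T))) := by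
  obtain ⟨hη0, hη2⟩ := hη
  obtain ⟨hθ0, hθπ⟩ := hθ
  have hπ : (0:ℝ) < Real.pi := Real.pi_pos
  have h1η : (0:ℝ) < 1 - η := by linarith
  -- increment bounds from MVT
  have key : ∀ x ∈ Set.Icc (0:ℝ) S, ∀ y ∈ Set.Icc (0:ℝ) S, x ≤ y →
      (1 - η) * T * (y - x) ≤ R y - R x ∧ R y - R x ≤ (1 + η) * T * (y - x) := by
    intro x hx y hy hxy
    have hg : ∀ s ∈ Set.Icc (0:ℝ) S,
        HasDerivWithinAt (fun t => R t - T * t) (R' s - T) (Set.Icc (0:ℝ) S) s := by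
      intro s hs
      have h := (hR s hs).sub ((hasDerivWithinAt_id s _).const_mul T)
      simp only [mul_one] at h
      exact h
    have hbound : ∀ s ∈ Set.Icc (0:ℝ) S, ‖R' s - T‖ ≤ η * T := by
      intro s hs
      obtain ⟨h1, h2⟩ := hR' s hs
      rw [Real.norm_eq_abs, abs_le]
      constructor <;> nlinarith
    have hmvt := (convex_Icc (0:ℝ) S).norm_image_sub_le_of_norm_hasDerivWithin_le
      hg hbound hx hy
    simp only [Real.norm_eq_abs] at hmvt
    rw [abs_le, abs_of_nonneg (by linarith : (0:ℝ) ≤ y - x)] at hmvt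
    constructor <;> nlinarith [hmvt.1, hmvt.2]
  set L : ℝ := θ / (Real.pi * lam * ((1 - η) * T)) with hLdef
  have hL0 : (0:ℝ) ≤ L := by positivity
  set Ek : ℤ → Set ℝ := fun k =>
    {s ∈ Set.Icc (0:ℝ) S | |2 * Real.pi * lam * R s - a - 2 * Real.pi * (k:ℝ)| ≤ θ}
    with hEkdef
  have h0mem : (0:ℝ) ∈ Set.Icc (0:ℝ) S := ⟨le_refl 0, hS.le⟩
  have hSmem : S ∈ Set.Icc (0:ℝ) S := ⟨hS.le, le_refl S⟩
  -- each Ek has measure ≤ L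
  have hdist : ∀ k : ℤ, ∀ x ∈ Ek k, ∀ y ∈ Ek k, x ≤ y → y - x ≤ L := by
    intro k x hx y hy hxy
    obtain ⟨hx1, hx2⟩ := hx
    obtain ⟨hy1, hy2⟩ := hy
    rw [abs_le] at hx2 hy2
    have hk := (key x hx1 y hy1 hxy).1
    rw [hLdef, le_div_iff₀ (by positivity)]
    nlinarith [mul_le_mul_of_nonneg_left hk (by positivity : (0:ℝ) ≤ Real.pi * lam)]
  have hvol : ∀ k : ℤ, volume (Ek k) ≤ ENNReal.ofReal L := by
    intro k
    refine le_trans (Real.volume_le_diam _) (EMetric.diam_le ?_)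
    intro x hx y hy
    rw [edist_dist]
    refine ENNReal.ofReal_le_ofReal ?_
    rw [Real.dist_eq, abs_le]
    rcases le_total x y with h | h
    · exact ⟨by linarith [hdist k x hx y hy h], by linarith [hdist k x hx y hy h]⟩
    · exact ⟨by linarith [hdist k y hy x hx h], by linarith [hdist k y hy x hx h]⟩
  set c : ℝ := a / (2 * Real.pi) with hcdef
  set k0 : ℤ := ⌈lam * R 0 - c - θ / (2 * Real.pi)⌉ with hk0def
  set k1 : ℤ := ⌊lam * R S - c + θ / (2 * Real.pi)⌋ with hk1def
  have hsub : {s ∈ Set.Icc (0:ℝ) S |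
      ∃ k : ℤ, |2 * Real.pi * lam * R s - a - 2 * Real.pi * (k : ℝ)| ≤ θ}
      ⊆ ⋃ k ∈ Finset.Icc k0 k1, Ek k := by
    rintro s ⟨hs, k, hk⟩
    have hRk : R 0 ≤ R s ∧ R s ≤ R S := by
      constructor
      · nlinarith [(key 0 h0mem s hs hs.1).1,
          mul_nonneg (mul_nonneg h1η.le hT.le) hs.1]
      · nlinarith [(key s hs S hSmem hs.2).1,
          mul_nonneg (mul_nonneg h1η.le hT.le) (sub_nonneg.mpr hs.2)]
    have hkabs := hk
    rw [abs_le] at hkabs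
    have hmem : k ∈ Finset.Icc k0 k1 := by
      rw [Finset.mem_Icc]
      constructor
      · rw [hk0def, Int.ceil_le]
        have h2π : (0:ℝ) < 2 * Real.pi := by positivity
        rw [← mul_le_mul_iff_right₀ h2π]
        have heq : 2 * Real.pi * (lam * R 0 - c - θ / (2 * Real.pi))
            = 2 * Real.pi * lam * R 0 - a - θ := by
          rw [hcdef]; field_simp
        rw [heq]
        nlinarith [hkabs.2, mul_le_mul_of_nonneg_left hRk.1
          (by positivity : (0:ℝ) ≤ 2 * Real.pi * lam)]
      · rw [hk1def, Int.le_floor]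
        have h2π : (0:ℝ) < 2 * Real.pi := by positivity
        rw [← mul_le_mul_iff_right₀ h2π]
        have heq : 2 * Real.pi * (lam * R S - c + θ / (2 * Real.pi))
            = 2 * Real.pi * lam * R S - a + θ := by
          rw [hcdef]; field_simp
        rw [heq]
        nlinarith [hkabs.1, mul_le_mul_of_nonneg_left hRk.2
          (by positivity : (0:ℝ) ≤ 2 * Real.pi * lam)]
    exact Set.mem_biUnion hmem ⟨hs, hk⟩
  set N : ℝ := lam * (1 + η) * T * S + 3/2 with hNdef
  have hN0 : (0:ℝ) ≤ N := by positivity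
  have hcard : ((Finset.Icc k0 k1).card : ℝ) ≤ N := by
    rcases le_or_gt k0 k1 with h | h
    · rw [Int.card_Icc]
      have h1 : (0:ℤ) ≤ k1 + 1 - k0 := by omega
      have h2 : ((k1 + 1 - k0).toNat : ℝ) = (k1 : ℝ) + 1 - (k0 : ℝ) := by
        have h3 := Int.toNat_of_nonneg h1
        exact_mod_cast congrArg (Int.cast : ℤ → ℝ) h3
      rw [h2]
      have hf : (k1:ℝ) ≤ lam * R S - c + θ / (2 * Real.pi) := Int.floor_le _
      have hc : lam * R 0 - c - θ / (2 * Real.pi) ≤ (k0:ℝ) := Int.le_ceil _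
      have hRS : R S - R 0 ≤ (1 + η) * T * S := by
        have := (key 0 h0mem S hSmem hS.le).2; simpa using this
      have hθπ' : θ / (2 * Real.pi) ≤ 1/4 := by
        rw [div_le_iff₀ (by positivity)]
        nlinarith
      rw [hNdef]
      nlinarith [mul_le_mul_of_nonneg_left hRS hlam.le]
    · rw [Int.card_Icc]
      have : k1 + 1 - k0 ≤ 0 := by omega
      rw [Int.toNat_of_nonpos this]
      simpa using hN0
  have harith : N * L ≤ θ * (1 + η) / (Real.pi * (1 - η)) * (S + 4 / (lam * T)) := by
    have e1 : θ * (1 + η) / (Real.pi * (1 - η)) * (S + 4 / (lam * T))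
        = lam * (1 + η) * T * S * L + 4 * (1 + η) * L := by
      rw [hLdef]; field_simp
    rw [e1, hNdef]
    nlinarith [mul_nonneg hη0.le hL0]
  calc volume {s ∈ Set.Icc (0:ℝ) S |
      ∃ k : ℤ, |2 * Real.pi * lam * R s - a - 2 * Real.pi * (k : ℝ)| ≤ θ}
      ≤ volume (⋃ k ∈ Finset.Icc k0 k1, Ek k) := measure_mono hsub
    _ ≤ ∑ k ∈ Finset.Icc k0 k1, volume (Ek k) := measure_biUnion_finset_le _ _
    _ ≤ ∑ k ∈ Finset.Icc k0 k1, ENNReal.ofReal L :=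
        Finset.sum_le_sum fun k _ => hvol k
    _ = ((Finset.Icc k0 k1).card : ENNReal) * ENNReal.ofReal L := by
        rw [Finset.sum_const, nsmul_eq_mul]
    _ ≤ ENNReal.ofReal N * ENNReal.ofReal L := by
        gcongr
        rw [← ENNReal.ofReal_natCast]
        exact ENNReal.ofReal_le_ofReal hcard
    _ = ENNReal.ofReal (N * L) := (ENNReal.ofReal_mul hN0).symm
    _ ≤ _ := ENNReal.ofReal_le_ofReal harith
end

section
/- Let (M, μ) be a probability space and φ = (φ_s)_{s∈ℝ} a jointly measurable flow on M. Let (g_t)_{t > 0} be a family of measurable functions g_t : M → ℝ which is uniformly bounded (there is C > 0 with |g_t(x)| ≤ C for all t and x), and such that for every fixed s ∈ ℝ, the functions x ↦ g_t(φ_s(x)) converge to 0 in μ-measure as t → ∞. Then for every σ > 0, the functions x ↦ ∫₀^σ |g_t(φ_s(x))| ds converge to 0 in μ-measure as t → ∞. -/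
open MeasureTheory Filter

/-- **A dominated-convergence-in-measure lemma along a flow.**
Let `μ` be a probability measure on `M` and `φ` a jointly measurable flow on `M`.
Let `(g_t)_{t>0}` be a uniformly bounded family of measurable functions `M → ℝ` such
that, for every fixed `s`, the functions `x ↦ g_t(φ_s x)` converge to `0` in
`μ`-measure as `t → ∞`.  Then for every `σ > 0` the functions
`x ↦ ∫₀^σ |g_t(φ_s x)| ds` converge to `0` in `μ`-measure as `t → ∞`. -/
theorem integral_along_fiber_tendsto_zero_in_measure
    {M : Type*} [MeasurableSpace M] (μ : Measure M) [IsProbabilityMeasure μ]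
    (φ : ℝ → M → M)
    (hφ0 : φ 0 = id) (hφadd : ∀ s r : ℝ, φ (s + r) = φ s ∘ φ r)
    (hφm : Measurable fun p : ℝ × M => φ p.1 p.2)
    (g : ℝ → M → ℝ)
    (hgm : ∀ t : ℝ, 0 < t → Measurable (g t))
    (C : ℝ) (hC : 0 < C) (hgb : ∀ t : ℝ, 0 < t → ∀ x : M, |g t x| ≤ C)
    (hconv : ∀ s : ℝ, ∀ δ > (0:ℝ),
      Tendsto (fun t : ℝ => μ {x : M | δ < |g t (φ s x)|}) atTop (nhds 0)) :
    ∀ σ > (0:ℝ), ∀ δ > (0:ℝ),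
      Tendsto (fun t : ℝ => μ {x : M | δ < ∫ s in (0:ℝ)..σ, |g t (φ s x)|})
        atTop (nhds 0) := by
  intro σ hσ δ hδ
  set ν := volume.restrict (Set.Ioc (0:ℝ) σ) with hνdef
  haveI hνfin : IsFiniteMeasure ν := by
    constructor
    rw [hνdef, Measure.restrict_apply_univ, Real.volume_Ioc]
    exact ENNReal.ofReal_lt_top
  -- basic measurability/integrability for fixed t > 0, s
  have meas_x : ∀ t, 0 < t → ∀ s : ℝ, Measurable fun x : M => |g t (φ s x)| := by
    intro t ht s
    exact ((hgm t ht).comp (hφm.comp (measurable_const.prodMk measurable_id))).abs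
  have int_x : ∀ t, 0 < t → ∀ s : ℝ, Integrable (fun x : M => |g t (φ s x)|) μ := by
    intro t ht s
    refine Integrable.mono' (integrable_const C) (meas_x t ht s).aestronglyMeasurable ?_
    exact ae_of_all _ fun x => by simpa [abs_abs] using hgb t ht (φ s x)
  -- each inner integral is at most C
  have hGle : ∀ t, 0 < t → ∀ s : ℝ, ∫ x, |g t (φ s x)| ∂μ ≤ C := by
    intro t ht s
    calc ∫ x, |g t (φ s x)| ∂μ ≤ ∫ _x, C ∂μ :=
          integral_mono (int_x t ht s) (integrable_const C) fun x => hgb t ht (φ s x)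
      _ = C := by simp
  -- Lemma A: for each fixed s, the inner integral tends to 0
  have hA : ∀ s : ℝ, Tendsto (fun t => ∫ x, |g t (φ s x)| ∂μ) atTop (nhds 0) := by
    intro s
    refine Metric.tendsto_nhds.mpr fun ε hε => ?_
    have hε2 : (0:ℝ) < ε / 2 := by positivity
    have h1 : Tendsto (fun t => C * (μ {x | ε/2 < |g t (φ s x)|}).toReal) atTop (nhds 0) := by
      have h0 : Tendsto (fun t => (μ {x | ε/2 < |g t (φ s x)|}).toReal) atTop (nhds 0) := by
        have := (ENNReal.tendsto_toReal (by simp : (0:ENNReal) ≠ ⊤)).comp (hconv s (ε/2) hε2)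
        exact this
      simpa using h0.const_mul C
    have h2 : ∀ᶠ t in atTop, C * (μ {x | ε/2 < |g t (φ s x)|}).toReal < ε/2 :=
      h1.eventually_lt_const (by positivity)
    filter_upwards [h2, eventually_gt_atTop (0:ℝ)] with t ht2 ht
    have hnn : (0:ℝ) ≤ ∫ x, |g t (φ s x)| ∂μ := integral_nonneg fun x => abs_nonneg _
    rw [Real.dist_eq, sub_zero, abs_of_nonneg hnn]
    have hS : MeasurableSet {x : M | ε/2 < |g t (φ s x)|} :=
      measurableSet_lt measurable_const (meas_x t ht s)
    have key : ∫ x, |g t (φ s x)| ∂μ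
        ≤ ε/2 + C * (μ {x | ε/2 < |g t (φ s x)|}).toReal := by
      have hint2 : Integrable
          (fun x => ε/2 + Set.indicator {x : M | ε/2 < |g t (φ s x)|} (fun _ => C) x) μ :=
        (integrable_const (ε/2)).add ((integrable_const C).indicator hS)
      have hptw : ∀ x, |g t (φ s x)|
          ≤ ε/2 + Set.indicator {x : M | ε/2 < |g t (φ s x)|} (fun _ => C) x := by
        intro x
        simp only [Set.indicator_apply, Set.mem_setOf_eq]
        split_ifs with hx
        · linarith [hgb t ht (φ s x)]
        · linarith [le_of_not_gt hx]
      calc ∫ x, |g t (φ s x)| ∂μ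
          ≤ ∫ x, (ε/2 + Set.indicator {x : M | ε/2 < |g t (φ s x)|} (fun _ => C) x) ∂μ :=
            integral_mono (int_x t ht s) hint2 hptw
        _ = ε/2 + C * (μ {x | ε/2 < |g t (φ s x)|}).toReal := by
            rw [integral_add (integrable_const _) ((integrable_const C).indicator hS),
              integral_const, integral_indicator_const _ hS]
            simp [mul_comm]
            exact Or.inl rfl
    linarith
  -- Lemma B: double integral tends to 0 (dominated convergence over s)
  have hB : Tendsto (fun t => ∫ s, (∫ x, |g t (φ s x)| ∂μ) ∂ν) atTop (nhds 0) := by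
    have := tendsto_integral_filter_of_dominated_convergence (μ := ν) (l := atTop)
      (F := fun t s => ∫ x, |g t (φ s x)| ∂μ) (f := fun _ => (0:ℝ)) (fun _ => C)
      (by
        filter_upwards [eventually_gt_atTop (0:ℝ)] with t ht
        exact (StronglyMeasurable.integral_prod_right' (ν := μ)
          (f := fun p : ℝ × M => |g t (φ p.1 p.2)|)
          (((hgm t ht).comp hφm).abs.stronglyMeasurable)).aestronglyMeasurable)
      (by
        filter_upwards [eventually_gt_atTop (0:ℝ)] with t ht
        refine ae_of_all _ fun s => ?_
        rw [Real.norm_eq_abs, abs_of_nonneg (integral_nonneg fun x => abs_nonneg _)]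
        exact hGle t ht s)
      (integrable_const C)
      (ae_of_all _ hA)
    simpa using this
  -- Fubini for t > 0
  have hswap : ∀ t, 0 < t →
      ∫ x, (∫ s, |g t (φ s x)| ∂ν) ∂μ = ∫ s, (∫ x, |g t (φ s x)| ∂μ) ∂ν := by
    intro t ht
    have hint : Integrable (Function.uncurry fun s x => |g t (φ s x)|) (ν.prod μ) := by
      refine Integrable.mono' (integrable_const C)
        (((hgm t ht).comp hφm).abs.aestronglyMeasurable) ?_
      exact ae_of_all _ fun p => by
        simpa [Function.uncurry, abs_abs] using hgb t ht (φ p.1 p.2)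
    exact (integral_integral_swap hint).symm
  -- Markov's inequality bound, for t > 0
  have hmain : ∀ t, 0 < t →
      μ {x : M | δ < ∫ s, |g t (φ s x)| ∂ν}
        ≤ ENNReal.ofReal ((∫ s, (∫ x, |g t (φ s x)| ∂μ) ∂ν) / δ) := by
    intro t ht
    set h : M → ℝ := fun x => ∫ s, |g t (φ s x)| ∂ν with hdef
    have hmeas : StronglyMeasurable h :=
      StronglyMeasurable.integral_prod_left (μ := ν)
        (((hgm t ht).comp hφm).abs.stronglyMeasurable)
    have hbd : ∀ x, h x ≤ σ * C := by
      intro x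
      have : ∫ s, |g t (φ s x)| ∂ν ≤ ∫ _s, C ∂ν := by
        refine integral_mono ?_ (integrable_const C) fun s => hgb t ht (φ s x)
        refine Integrable.mono' (integrable_const C)
          (((hgm t ht).comp (hφm.comp (measurable_id.prodMk measurable_const))).abs).aestronglyMeasurable ?_
        exact ae_of_all _ fun s => by simpa [abs_abs] using hgb t ht (φ s x)
      calc h x ≤ ∫ _s, C ∂ν := this
        _ = σ * C := by
            rw [integral_const]
            simp [hνdef, Real.volume_Ioc, ENNReal.toReal_ofReal hσ.le, smul_eq_mul]
            exact Or.inl hσ.le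
    have hnn : 0 ≤ᵐ[μ] h := ae_of_all _ fun x => integral_nonneg fun s => abs_nonneg _
    have hint : Integrable h μ := by
      refine Integrable.mono' (integrable_const (σ * C)) hmeas.aestronglyMeasurable ?_
      refine ae_of_all _ fun x => ?_
      rw [Real.norm_eq_abs, abs_of_nonneg (integral_nonneg fun s => abs_nonneg _)]
      exact hbd x
    have markov := mul_meas_ge_le_integral_of_nonneg hnn hint δ
    have hsub : μ {x | δ < h x} ≤ μ {x | δ ≤ h x} :=
      measure_mono (Set.setOf_subset_setOf.mpr fun x hx => le_of_lt hx)
    have h1 : (μ {x | δ < h x}).toReal ≤ (∫ x, h x ∂μ) / δ := by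
      have h2 : (μ {x | δ < h x}).toReal ≤ (μ {x | δ ≤ h x}).toReal :=
        ENNReal.toReal_mono (measure_ne_top _ _) hsub
      rw [le_div_iff₀ hδ]
      calc (μ {x | δ < h x}).toReal * δ ≤ (μ {x | δ ≤ h x}).toReal * δ := by
            exact mul_le_mul_of_nonneg_right h2 hδ.le
        _ = δ * (μ {x | δ ≤ h x}).toReal := mul_comm _ _
        _ ≤ ∫ x, h x ∂μ := markov
    calc μ {x | δ < h x} = ENNReal.ofReal (μ {x | δ < h x}).toReal :=
          (ENNReal.ofReal_toReal (measure_ne_top _ _)).symm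
      _ ≤ ENNReal.ofReal ((∫ x, h x ∂μ) / δ) := ENNReal.ofReal_le_ofReal h1
      _ = ENNReal.ofReal ((∫ s, (∫ x, |g t (φ s x)| ∂μ) ∂ν) / δ) := by
          rw [hdef, hswap t ht]
  -- assemble: squeeze in ℝ≥0∞
  have hof : Tendsto (fun t => ENNReal.ofReal ((∫ s, (∫ x, |g t (φ s x)| ∂μ) ∂ν) / δ))
      atTop (nhds 0) := by
    have h1 : Tendsto (fun t => (∫ s, (∫ x, |g t (φ s x)| ∂μ) ∂ν) / δ) atTop (nhds 0) := by
      simpa using hB.div_const δ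
    have := (ENNReal.continuous_ofReal.tendsto 0).comp h1
    rw [ENNReal.ofReal_zero] at this
    exact this
  refine tendsto_of_tendsto_of_tendsto_of_le_of_le' tendsto_const_nhds hof
    (Eventually.of_forall fun t => zero_le) ?_
  filter_upwards [eventually_gt_atTop (0:ℝ)] with t ht
  have heq : {x : M | δ < ∫ s in (0:ℝ)..σ, |g t (φ s x)|}
      = {x : M | δ < ∫ s, |g t (φ s x)| ∂ν} := by
    ext x
    rw [Set.mem_setOf_eq, Set.mem_setOf_eq, intervalIntegral.integral_of_le hσ.le, ← hνdef]
  rw [heq]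
  exact hmain t ht
end

section
/- (Weak limits of orbit-graph measures are skew-product invariant.) Let M be a compact metric space, φ : ℝ × M → M a continuous flow, f : M → ℝ continuous, and F_t(x) := ∫₀^t f(φ_τ(x)) dτ. Define the skew-product maps Ψ_t : M × ℝ → M × ℝ by Ψ_t(x, s) = (φ_t(x), s + F_t(x)). For x ∈ M and T > 0, let ν_{T,x} be the Borel probability measure on M × ℝ obtained as the pushforward of the normalized Lebesgue measure (1/T)·Leb|_{[0,T]} under the map τ ↦ (φ_τ(x), F_τ(x)). Suppose x̄ ∈ M, T_n → ∞ is a sequence, and ν is a finite Borel measure on M × ℝ such that ∫ g dν_{T_n, x̄} → ∫ g dν for every bounded continuous function g : M × ℝ → ℝ. Then (Ψ_t)_*ν = ν for every t ∈ ℝ. -/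
open MeasureTheory Filter

lemma ext_of_integral_bdd_cont {Ω : Type*} [MetricSpace Ω] [MeasurableSpace Ω] [BorelSpace Ω]
    {μ ν : Measure Ω} [IsFiniteMeasure μ] [IsFiniteMeasure ν]
    (h : ∀ g : Ω → ℝ, Continuous g → (∃ K : ℝ, ∀ p : Ω, |g p| ≤ K) →
      ∫ p, g p ∂μ = ∫ p, g p ∂ν) : μ = ν := by
  apply ext_of_forall_lintegral_eq_of_IsFiniteMeasure
  intro f
  have hco : Continuous fun x => ((f x : ℝ)) := NNReal.continuous_coe.comp f.continuous
  have hb : ∃ K : ℝ, ∀ p : Ω, |(f p : ℝ)| ≤ K := by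
    obtain ⟨C, hC⟩ := f.isBounded_range.subset_closedBall 0
    exact ⟨C, fun p => by
      have := hC ⟨p, rfl⟩
      simpa [Metric.mem_closedBall, NNReal.dist_eq, NNReal.abs_eq] using this⟩
  obtain ⟨K, hK⟩ := hb
  have hint : ∀ (m : Measure Ω) [IsFiniteMeasure m], Integrable (fun x => ((f x : ℝ))) m := by
    intro m _
    exact (integrable_const K).mono' hco.aestronglyMeasurable
      (Filter.Eventually.of_forall fun x => by simpa using hK x)
  rw [lintegral_coe_eq_integral _ (hint μ), lintegral_coe_eq_integral _ (hint ν),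
    h _ hco ⟨K, hK⟩]


/-- **Weak limits of orbit-graph measures are invariant under the skew-product flow.**
Let `φ` be a continuous flow on a compact metric space `M`, `f : M → ℝ` continuous,
`F t x = ∫₀^t f(φ_τ x) dτ` its Birkhoff integrals, and
`Ψ_t(x, s) = (φ_t x, s + F t x)` the associated skew-product flow on `M × ℝ`.
For `T` and `x`, let `ν_{T,x}` be the pushforward of the normalized Lebesgue measure
`(1/T)·Leb|_{[0,T]}` under `τ ↦ (φ_τ x, F τ x)`.  If `T_n → ∞`, and `ν` is a finite
Borel measure on `M × ℝ` with `∫ g dν_{T_n, x̄} → ∫ g dν` for every bounded continuous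
`g`, then `(Ψ_t)_*ν = ν` for every `t ∈ ℝ`. -/
theorem weak_limit_of_orbit_graph_measures_skew_invariant
    {M : Type*} [MetricSpace M] [CompactSpace M] [MeasurableSpace M] [BorelSpace M]
    (φ : ℝ → M → M) (hφc : Continuous fun p : ℝ × M => φ p.1 p.2)
    (hφ0 : φ 0 = id) (hφadd : ∀ s t : ℝ, φ (t + s) = φ t ∘ φ s)
    (f : M → ℝ) (hf : Continuous f)
    (F : ℝ → M → ℝ) (hF : ∀ (t : ℝ) (x : M), F t x = ∫ τ in (0:ℝ)..t, f (φ τ x))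
    (ν_ : ℝ → M → Measure (M × ℝ))
    (hν_ : ∀ (T : ℝ) (x : M), ν_ T x =
      Measure.map (fun τ : ℝ => (φ τ x, F τ x))
        ((ENNReal.ofReal T)⁻¹ • volume.restrict (Set.Icc (0:ℝ) T)))
    (xbar : M) (Tn : ℕ → ℝ) (hTn : Tendsto Tn atTop atTop)
    (ν : Measure (M × ℝ)) [IsFiniteMeasure ν]
    (hconv : ∀ g : M × ℝ → ℝ, Continuous g → (∃ K : ℝ, ∀ p : M × ℝ, |g p| ≤ K) →
      Tendsto (fun n : ℕ => ∫ p, g p ∂(ν_ (Tn n) xbar)) atTop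
        (nhds (∫ p, g p ∂ν))) :
    ∀ t : ℝ, Measure.map (fun p : M × ℝ => (φ t p.1, p.2 + F t p.1)) ν = ν := by
  -- continuity of F (jointly)
  have hFc : Continuous fun p : ℝ × M => F p.1 p.2 := by
    have : Continuous fun p : ℝ × M => ∫ τ in (0:ℝ)..p.1, f (φ τ p.2) := by
      have h1 : Continuous fun q : (ℝ × M) × ℝ => f (φ q.2 q.1.2) :=
        hf.comp (hφc.comp (continuous_snd.prodMk (continuous_snd.comp continuous_fst)))
      exact intervalIntegral.continuous_parametric_intervalIntegral_of_continuous
        (f := fun (p : ℝ × M) (τ : ℝ) => f (φ τ p.2)) h1 continuous_fst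
    convert this using 2 with p
    exact hF p.1 p.2
  intro t
  set Ψ : M × ℝ → M × ℝ := fun p => (φ t p.1, p.2 + F t p.1) with hΨ
  have hΨc : Continuous Ψ := by
    apply Continuous.prodMk
    · exact hφc.comp (continuous_const.prodMk continuous_fst)
    · exact continuous_snd.add (hFc.comp (continuous_const.prodMk continuous_fst))
  -- the orbit map
  set γ : ℝ → M × ℝ := fun τ => (φ τ xbar, F τ xbar) with hγ
  have hγc : Continuous γ := by
    apply Continuous.prodMk
    · exact hφc.comp (continuous_id.prodMk continuous_const)
    · exact hFc.comp (continuous_id.prodMk continuous_const)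
  -- cocycle identity
  have hcoc : ∀ τ : ℝ, Ψ (γ τ) = γ (t + τ) := by
    intro τ
    have h1 : φ t (φ τ xbar) = φ (t + τ) xbar := by rw [hφadd τ t]; rfl
    have h2 : F τ xbar + F t (φ τ xbar) = F (t + τ) xbar := by
      rw [hF, hF, hF]
      have ha : (∫ s in (0:ℝ)..t, f (φ s (φ τ xbar))) = ∫ s in τ..(t + τ), f (φ s xbar) := by
        have : ∀ s : ℝ, f (φ s (φ τ xbar)) = f (φ (s + τ) xbar) := by
          intro s; rw [hφadd τ s]; rfl
        simp_rw [this]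
        rw [intervalIntegral.integral_comp_add_right (fun s => f (φ s xbar)) τ]
        norm_num
      rw [ha]
      apply intervalIntegral.integral_add_adjacent_intervals
      · exact ((hf.comp (hφc.comp (continuous_id.prodMk continuous_const))).intervalIntegrable _ _)
      · exact ((hf.comp (hφc.comp (continuous_id.prodMk continuous_const))).intervalIntegrable _ _)
    simp only [hΨ, hγ, h1, h2]
  -- integral formula against ν_
  have hkey : ∀ (h : M × ℝ → ℝ), Continuous h → ∀ T : ℝ, 0 < T →
      ∫ p, h p ∂(ν_ T xbar) = T⁻¹ * ∫ τ in (0:ℝ)..T, h (γ τ) := by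
    intro h hc T hT
    rw [hν_]
    rw [integral_map hγc.measurable.aemeasurable hc.aestronglyMeasurable]
    rw [integral_smul_measure]
    rw [ENNReal.toReal_inv, ENNReal.toReal_ofReal hT.le]
    rw [intervalIntegral.integral_of_le hT.le, ← integral_Icc_eq_integral_Ioc]
    rfl
  -- fix a bounded continuous g
  apply ext_of_integral_bdd_cont
  intro g hg ⟨K, hK⟩
  have hΨm : Measurable Ψ := hΨc.measurable
  rw [integral_map hΨm.aemeasurable hg.aestronglyMeasurable]
  set G : ℝ → ℝ := fun τ => g (γ τ) with hGdef
  have hGc : Continuous G := hg.comp hγc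
  have hGi : ∀ a b : ℝ, IntervalIntegrable G volume a b := fun a b => hGc.intervalIntegrable a b
  -- evaluate the difference for large T
  have hdiff : ∀ T : ℝ, |t| + 1 ≤ T →
      |(∫ p, (g ∘ Ψ) p ∂(ν_ T xbar)) - ∫ p, g p ∂(ν_ T xbar)| ≤ T⁻¹ * (2 * K * |t|) := by
    intro T hT
    have hTpos : 0 < T := lt_of_lt_of_le (by positivity) hT
    rw [hkey _ (hg.comp hΨc) T hTpos, hkey _ hg T hTpos]
    have e1 : (∫ τ in (0:ℝ)..T, (g ∘ Ψ) (γ τ)) = ∫ τ in t..(t + T), G τ := by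
      have : ∀ τ : ℝ, (g ∘ Ψ) (γ τ) = G (t + τ) := fun τ => by
        simp only [Function.comp_apply, hcoc τ, hGdef]
      simp_rw [this]
      rw [intervalIntegral.integral_comp_add_left G t]
      norm_num
    rw [e1]
    have e2 : (∫ τ in t..(t + T), G τ) - (∫ τ in (0:ℝ)..T, G τ)
        = (∫ τ in t..(0:ℝ), G τ) + ∫ τ in T..(t + T), G τ := by
      have a1 : (∫ τ in t..(0:ℝ), G τ) + (∫ τ in (0:ℝ)..(t+T), G τ) = ∫ τ in t..(t+T), G τ :=
        intervalIntegral.integral_add_adjacent_intervals (hGi _ _) (hGi _ _)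
      have a2 : (∫ τ in (0:ℝ)..T, G τ) + (∫ τ in T..(t+T), G τ) = ∫ τ in (0:ℝ)..(t+T), G τ :=
        intervalIntegral.integral_add_adjacent_intervals (hGi _ _) (hGi _ _)
      rw [← a1, ← a2]; ring
    rw [← mul_sub, e2, abs_mul, abs_inv, abs_of_pos hTpos]
    apply mul_le_mul_of_nonneg_left _ (by positivity)
    have hb1 : |∫ τ in t..(0:ℝ), G τ| ≤ K * |t| := by
      have := intervalIntegral.norm_integral_le_of_norm_le_const
        (C := K) (f := G) (a := t) (b := 0) (fun x _ => by simpa using hK (γ x))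
      simpa using this
    have hb2 : |∫ τ in T..(t + T), G τ| ≤ K * |t| := by
      have := intervalIntegral.norm_integral_le_of_norm_le_const
        (C := K) (f := G) (a := T) (b := t + T) (fun x _ => by simpa using hK (γ x))
      simpa using this
    calc |(∫ τ in t..(0:ℝ), G τ) + ∫ τ in T..(t + T), G τ|
        ≤ |∫ τ in t..(0:ℝ), G τ| + |∫ τ in T..(t + T), G τ| := abs_add_le _ _
      _ ≤ K * |t| + K * |t| := add_le_add hb1 hb2
      _ = 2 * K * |t| := by ring
  -- the difference tends to zero
  have hK0 : 0 ≤ K := le_trans (abs_nonneg _) (hK (xbar, 0))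
  have hDlim : Tendsto (fun n => (∫ p, (g ∘ Ψ) p ∂(ν_ (Tn n) xbar))
      - ∫ p, g p ∂(ν_ (Tn n) xbar)) atTop (nhds 0) := by
    apply squeeze_zero_norm' (a := fun n => (Tn n)⁻¹ * (2 * K * |t|))
    · filter_upwards [hTn.eventually_ge_atTop (|t| + 1)] with n hn
      simpa [Real.norm_eq_abs] using hdiff (Tn n) hn
    · have : Tendsto (fun n => (Tn n)⁻¹) atTop (nhds 0) :=
        tendsto_inv_atTop_zero.comp hTn
      simpa using this.mul_const (2 * K * |t|)
  have hA := hconv (g ∘ Ψ) (hg.comp hΨc) ⟨K, fun p => hK (Ψ p)⟩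
  have hB := hconv g hg ⟨K, hK⟩
  have hA' : Tendsto (fun n => ∫ p, (g ∘ Ψ) p ∂(ν_ (Tn n) xbar)) atTop
      (nhds (∫ p, g p ∂ν)) := by
    have := hDlim.add hB
    simpa using this
  have := tendsto_nhds_unique hA hA'
  simpa [Function.comp] using this
end
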